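/- arXiv:1608.06265 — 9 statements merged into one kernel-verified Lean document; each statement's English description precedes it below -/
import Mathlib

section
/- For a finitely generated group Γ, the following conditions are equivalent: (1) there exist a commutative unital ring R, a finitely generated projective R-module M and a group homomorphism Γ → Aut_R(M) (the group of R-linear automorphisms of M) whose image is not virtually solvable; (2) there exist a commutative unital ring R, an integer n ≥ 1 and a group homomorphism Γ → GL_n(R) whose image is not virtually solvable; (3) there exist a field K, an integer n ≥ 1 and a group homomorphism Γ → GL_n(K) whose image is not virtually solvable. -/
/-- A group is virtually solvable if it contains a solvable subgroup of finite index. -/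
def IsVirtuallySolvable (G : Type*) [Group G] : Prop :=
  ∃ H : Subgroup G, H.FiniteIndex ∧ IsSolvable H

/-!
A finitely generated projective module `M` is a retract `π ∘ s = id` of some `R^n`, and
`e ↦ s e π + (1 - s π)` embeds `Aut_R(M)` into `GL_n(R)`; conversely `GL_n(R) = Aut_R(R^n)`.

For rings versus fields: since `Γ` is finitely generated, its image lies in `GL_n(A)` for a finitely
generated, hence Noetherian, subring `A`. Such an `A` has finitely many minimal primes `p`, and the
kernel of `GL_n(A) → ∏_p GL_n(Frac(A/p))` consists of matrices `≡ 1` modulo the nilradical.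
This congruence subgroup is solvable, because the commutator of matrices `≡ 1` mod `I` and mod `J`
is `≡ 1` mod `IJ` and the nilradical is nilpotent. So if every image in `GL_n(Frac(A/p))` were
virtually solvable, the image in `GL_n(A)` would be too.
-/

open Matrix

section VirtuallySolvable

variable {G H : Type*} [Group G] [Group H]

theorem Group.isSolvable_pi {ι : Type*} [Finite ι] {G : ι → Type*} [∀ i, Group (G i)]
    [∀ i, Group.IsSolvable (G i)] : Group.IsSolvable (∀ i, G i) := by
  cases nonempty_fintype ι
  choose n hn using fun i => (inferInstance : Group.IsSolvable (G i)).solvable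
  refine ⟨⟨Finset.univ.sup n, eq_bot_iff.mpr fun x hx => Subgroup.mem_bot.mpr (funext fun i => ?_)⟩⟩
  have hxi : x i ∈ derivedSeries (G i) (Finset.univ.sup n) :=
    map_derivedSeries_le_derivedSeries (Pi.evalMonoidHom G i) _ ⟨x, hx, rfl⟩
  exact Subgroup.mem_bot.mp
    (hn i ▸ derivedSeries_antitone (G i) (Finset.le_sup (Finset.mem_univ i)) hxi)

theorem Subgroup.finiteIndex_comap (f : G →* H) (K : Subgroup H) [K.FiniteIndex] :
    (K.comap f).FiniteIndex :=
  ⟨by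
    rw [Subgroup.index_comap]
    exact (K.isFiniteRelIndex_of_finiteIndex (K := f.range)).relIndex_ne_zero⟩

theorem IsVirtuallySolvable.of_isSolvable_ker (g : G →* H) [Group.IsSolvable g.ker]
    (h : IsVirtuallySolvable H) : IsVirtuallySolvable G := by
  obtain ⟨K, hK, hKs⟩ := h
  have : Group.IsSolvable K := hKs
  refine ⟨K.comap g, K.finiteIndex_comap g, ?_⟩
  have hker : (g.subgroupComap K).ker ≤ (Subgroup.inclusion (g.ker_le_comap K)).range :=
    fun x hx => ⟨⟨x, congrArg Subtype.val hx⟩, rfl⟩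
  exact Group.isSolvable_of_ker_le_range _ _ hker

theorem IsVirtuallySolvable.of_injective {g : G →* H} (hg : Function.Injective g)
    (h : IsVirtuallySolvable H) : IsVirtuallySolvable G :=
  have : Group.IsSolvable g.ker := by rw [(MonoidHom.ker_eq_bot_iff g).mpr hg]; infer_instance
  h.of_isSolvable_ker g

theorem MulEquiv.isVirtuallySolvable_congr (e : G ≃* H) :
    IsVirtuallySolvable G ↔ IsVirtuallySolvable H :=
  ⟨.of_injective (g := e.symm.toMonoidHom) e.symm.injective,
    .of_injective (g := e.toMonoidHom) e.injective⟩

theorem isVirtuallySolvable_range_comp_iff {Γ : Type*} [Group Γ] (f : Γ →* G) {j : G →* H}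
    (hj : Function.Injective j) :
    IsVirtuallySolvable (j.comp f).range ↔ IsVirtuallySolvable f.range := by
  rw [MonoidHom.range_comp]
  exact (f.range.equivMapOfInjective j hj).isVirtuallySolvable_congr.symm

theorem IsVirtuallySolvable.pi {ι : Type*} [Finite ι] {G : ι → Type*} [∀ i, Group (G i)]
    (h : ∀ i, IsVirtuallySolvable (G i)) : IsVirtuallySolvable (∀ i, G i) := by
  choose K hK hKs using h
  have : ∀ i, Group.IsSolvable (K i) := hKs
  let L : Subgroup (∀ i, G i) := ⨅ i, (K i).comap (Pi.evalMonoidHom G i)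
  have hL : ∀ i, L ≤ (K i).comap (Pi.evalMonoidHom G i) := iInf_le _
  let φ : L →* ∀ i, K i := MonoidHom.pi fun i =>
    ((Pi.evalMonoidHom G i).subgroupComap (K i)).comp (Subgroup.inclusion (hL i))
  have hφ : Function.Injective φ := fun x y hxy =>
    Subtype.ext (funext fun i => congrArg Subtype.val (congrFun hxy i))
  have := Group.isSolvable_pi (G := fun i => K i)
  exact ⟨L, Subgroup.finiteIndex_iInf fun i => (K i).finiteIndex_comap _,
    Group.isSolvable_of_isSolvable_injective hφ⟩

theorem Subgroup.isVirtuallySolvable_of_map {ι : Type*} [Finite ι] {H : ι → Type*}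
    [∀ i, Group (H i)] (S : Subgroup G) (Φ : ∀ i, G →* H i) (N : Subgroup G)
    [Group.IsSolvable N] (hN : ∀ x ∈ S, (∀ i, Φ i x = 1) → x ∈ N)
    (hS : ∀ i, IsVirtuallySolvable (S.map (Φ i))) : IsVirtuallySolvable S := by
  let g : S →* ∀ i, S.map (Φ i) := MonoidHom.pi fun i => (Φ i).subgroupMap S
  let toN : g.ker →* N := (S.subtype.comp g.ker.subtype).codRestrict N fun x =>
    hN _ x.1.2 fun i => congrArg Subtype.val (congrFun x.2 i)
  have : Group.IsSolvable g.ker :=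
    Group.isSolvable_of_isSolvable_injective (f := toN) fun x y hxy => by
      ext; exact (Subtype.ext_iff.mp hxy :)
  exact (IsVirtuallySolvable.pi hS).of_isSolvable_ker g

end VirtuallySolvable

open scoped commutatorElement

theorem Ideal.mul_mem_matrix_mul {R : Type*} [CommSemiring R] {ι : Type*} [Fintype ι] [DecidableEq ι]
    {I J : Ideal R} {M N : Matrix ι ι R} (hM : M ∈ I.matrix ι) (hN : N ∈ J.matrix ι) :
    M * N ∈ (I * J).matrix ι := fun i j =>
  Submodule.sum_mem _ fun k _ => Ideal.mul_mem_mul (hM i k) (hN k j)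

namespace Matrix.GeneralLinearGroup

variable {ι R : Type*} [Fintype ι] [DecidableEq ι] [CommRing R]

def congruenceSubgroup (I : Ideal R) : Subgroup (GL ι R) :=
  (map (Ideal.Quotient.mk I)).ker

theorem mem_ker_map_iff {S : Type*} [CommRing S] (φ : R →+* S) (g : GL ι R) :
    g ∈ (map φ).ker ↔ (g : Matrix ι ι R) - 1 ∈ (RingHom.ker φ).matrix ι := by
  simp only [MonoidHom.mem_ker, Units.ext_iff, ← Matrix.ext_iff, Ideal.mem_matrix, RingHom.mem_ker,
    sub_apply, map_sub, sub_eq_zero]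
  simp [one_apply, apply_ite φ]

theorem mem_congruenceSubgroup {I : Ideal R} {g : GL ι R} :
    g ∈ congruenceSubgroup I ↔ (g : Matrix ι ι R) - 1 ∈ I.matrix ι := by
  rw [congruenceSubgroup, mem_ker_map_iff, Ideal.mk_ker]

theorem congruenceSubgroup_bot : congruenceSubgroup (ι := ι) (⊥ : Ideal R) = ⊥ := by
  ext g
  rw [mem_congruenceSubgroup, Ideal.matrix_bot, Submodule.mem_bot, sub_eq_zero, Subgroup.mem_bot,
    Units.ext_iff, Units.val_one]

theorem commutatorElement_mem_congruenceSubgroup {I J : Ideal R} {g h : GL ι R}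
    (hg : g ∈ congruenceSubgroup I) (hh : h ∈ congruenceSubgroup J) :
    ⁅g, h⁆ ∈ congruenceSubgroup (I * J) := by
  rw [mem_congruenceSubgroup] at hg hh ⊢
  have key : ((⁅g, h⁆ : GL ι R) : Matrix ι ι R) - 1 =
      (((g : Matrix ι ι R) - 1) * (h - 1) - (h - 1) * (g - 1)) *
        ((g⁻¹ * h⁻¹ : GL ι R) : Matrix ι ι R) := by
    have hgh : ((h * g * (g⁻¹ * h⁻¹) : GL ι R) : Matrix ι ι R) = 1 := by group; rfl
    have hexp : ((g : Matrix ι ι R) - 1) * (h - 1) - (h - 1) * (g - 1) = g * h - h * g := by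
      noncomm_ring
    rw [hexp, sub_mul, commutatorElement_def, ← hgh]
    simp only [Units.val_mul, mul_assoc]
  rw [key, ← Ideal.mul_top (I * J)]
  refine Ideal.mul_mem_matrix_mul (sub_mem (Ideal.mul_mem_matrix_mul hg hh) ?_) fun _ _ => trivial
  rw [mul_comm I J]
  exact Ideal.mul_mem_matrix_mul hh hg

theorem map_derivedSeries_le_congruenceSubgroup (I : Ideal R) (m : ℕ) :
    (derivedSeries (congruenceSubgroup (ι := ι) I) m).map (congruenceSubgroup I).subtype ≤
      congruenceSubgroup (I ^ 2 ^ m) := by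
  induction m with
  | zero =>
    rw [derivedSeries_zero, ← MonoidHom.range_eq_map, Subgroup.range_subtype, pow_zero, pow_one]
  | succ m ih =>
    rw [derivedSeries_succ, Subgroup.map_commutator, Subgroup.commutator_le, pow_succ, pow_mul, sq]
    exact fun g hg h hh => commutatorElement_mem_congruenceSubgroup (ih hg) (ih hh)

theorem isSolvable_congruenceSubgroup {I : Ideal R} (hI : IsNilpotent I) :
    Group.IsSolvable (congruenceSubgroup (ι := ι) I) := by
  obtain ⟨k, hk⟩ := hI
  refine ⟨⟨k, ?_⟩⟩
  have hbot : I ^ 2 ^ k = ⊥ :=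
    le_bot_iff.mp ((Ideal.pow_le_pow_right Nat.lt_two_pow_self.le).trans hk.le)
  have := map_derivedSeries_le_congruenceSubgroup (ι := ι) I k
  rwa [hbot, congruenceSubgroup_bot, le_bot_iff, Subgroup.map_eq_bot_iff_of_injective _
    (Subgroup.subtype_injective _)] at this

theorem map_injective {S : Type*} [CommRing S] {φ : R →+* S} (hφ : Function.Injective φ) :
    Function.Injective (map (n := ι) φ) :=
  fun _ _ hgh => Units.ext <| Matrix.map_injective hφ (congrArg Units.val hgh)

theorem mem_range_map_val {A : Subalgebra ℤ R} {g : GL ι R} (hg : (g : Matrix ι ι R) ∈ A.matrix)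
    (hg' : ((g⁻¹ : GL ι R) : Matrix ι ι R) ∈ A.matrix) :
    g ∈ (map (n := ι) A.val.toRingHom).range := by
  let val : Matrix ι ι A →+* Matrix ι ι R := A.val.toRingHom.mapMatrix
  have hval : Function.Injective val := Matrix.map_injective Subtype.val_injective
  let M : Matrix ι ι A := Matrix.of fun i j => ⟨_, hg i j⟩
  let N : Matrix ι ι A := Matrix.of fun i j => ⟨_, hg' i j⟩
  have hMN : M * N = 1 := hval (by rw [map_mul, map_one]; exact g.mul_inv)
  have hNM : N * M = 1 := hval (by rw [map_mul, map_one]; exact g.inv_mul)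
  exact ⟨⟨M, N, hMN, hNM⟩, Units.ext rfl⟩

/-- Take `A` generated by the entries of the images of the generators and of their inverses. -/
theorem exists_fg_subalgebra_factorization {Γ : Type*} [Group Γ] [Group.FG Γ] (f : Γ →* GL ι R) :
    ∃ (A : Subalgebra ℤ R) (f' : Γ →* GL ι A), A.FG ∧ (map A.val.toRingHom).comp f' = f := by
  obtain ⟨S, hS, hSfin⟩ := Group.fg_iff.mp ‹Group.FG Γ›
  let T : Set R := ⋃ s ∈ S ∪ S⁻¹, Set.range fun ij : ι × ι => (f s : Matrix ι ι R) ij.1 ij.2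
  have hTfin : T.Finite := (hSfin.union hSfin.inv).biUnion fun _ _ => Set.finite_range _
  let A := Algebra.adjoin ℤ T
  let j : GL ι A →* GL ι R := map A.val.toRingHom
  have hentries : ∀ s ∈ S ∪ S⁻¹, (f s : Matrix ι ι R) ∈ A.matrix := fun s hs i k =>
    Algebra.subset_adjoin (Set.mem_biUnion hs ⟨(i, k), rfl⟩)
  have hmem : ∀ γ, f γ ∈ j.range := by
    have hle : Subgroup.closure S ≤ j.range.comap f := by
      refine (Subgroup.closure_le _).mpr fun s hs => mem_range_map_val (hentries s (.inl hs)) ?_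
      rw [← map_inv]
      exact hentries s⁻¹ (.inr (by simpa using hs))
    exact fun γ => hle (hS ▸ Subgroup.mem_top γ)
  have hj : Function.Injective j := map_injective Subtype.val_injective
  refine ⟨A, (MonoidHom.ofInjective hj).symm.toMonoidHom.comp (f.codRestrict j.range hmem),
    Subalgebra.fg_def.mpr ⟨T, hTfin, rfl⟩, MonoidHom.ext fun γ => ?_⟩
  exact MonoidHom.apply_ofInjective_symm hj ⟨f γ, hmem γ⟩

end Matrix.GeneralLinearGroup

section FieldReduction

open Matrix.GeneralLinearGroup

universe u

variable {Γ : Type*} [Group Γ] {ι : Type*} [Fintype ι] [DecidableEq ι]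

theorem exists_field_not_isVirtuallySolvable_of_isNoetherianRing {R : Type u} [CommRing R]
    [IsNoetherianRing R] (f : Γ →* GL ι R) (hf : ¬ IsVirtuallySolvable f.range) :
    ∃ (K : Type u) (_ : Field K) (g : Γ →* GL ι K), ¬ IsVirtuallySolvable g.range := by
  by_contra! h
  have : Finite (minimalPrimes R) := (minimalPrimes.finite_of_isNoetherianRing R).to_subtype
  have (p : minimalPrimes R) : (p : Ideal R).IsPrime := p.2.1.1
  let φ (p : minimalPrimes R) : R →+* FractionRing (R ⧸ (p : Ideal R)) :=
    (algebraMap _ _).comp (Ideal.Quotient.mk p)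
  have hφ (p : minimalPrimes R) : RingHom.ker (φ p) = p := by
    rw [RingHom.ker_comp_of_injective _ (IsFractionRing.injective _ _), Ideal.mk_ker]
  have hker (x : GL ι R) (hx : ∀ p, map (φ p) x = 1) :
      x ∈ congruenceSubgroup (nilradical R) := by
    rw [mem_congruenceSubgroup, nilradical, ← Ideal.sInf_minimalPrimes]
    refine fun i j => Ideal.mem_sInf.mpr fun p hp => ?_
    have := (mem_ker_map_iff (φ ⟨p, hp⟩) x).mp (hx ⟨p, hp⟩) i j
    rwa [hφ] at this
  have := isSolvable_congruenceSubgroup (ι := ι) (IsNoetherianRing.isNilpotent_nilradical R)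
  exact hf (f.range.isVirtuallySolvable_of_map (fun p => map (φ p)) _ (fun x _ => hker x)
    fun p => MonoidHom.range_comp (map (φ p)) f ▸ h _ _ _)

theorem exists_field_not_isVirtuallySolvable [Group.FG Γ] {R : Type u} [CommRing R]
    (f : Γ →* GL ι R) (hf : ¬ IsVirtuallySolvable f.range) :
    ∃ (K : Type u) (_ : Field K) (g : Γ →* GL ι K), ¬ IsVirtuallySolvable g.range := by
  obtain ⟨A, f', hA, rfl⟩ := exists_fg_subalgebra_factorization f
  have : Algebra.FiniteType ℤ A := (Subalgebra.fg_iff_finiteType A).mp hA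
  have : IsNoetherianRing A := Algebra.FiniteType.isNoetherianRing ℤ A
  rw [isVirtuallySolvable_range_comp_iff _ (map_injective Subtype.val_injective)] at hf
  exact exists_field_not_isVirtuallySolvable_of_isNoetherianRing f' hf

end FieldReduction

section Retract

variable {R M V : Type*} [Semiring R] [AddCommGroup M] [Module R M] [AddCommGroup V] [Module R V]

/-- Multiplicative because `s π` and `1 - s π` are complementary idempotents. -/
def Module.End.extendOfRetraction (π : V →ₗ[R] M) (s : M →ₗ[R] V) (hs : π ∘ₗ s = LinearMap.id) :
    Module.End R M →* Module.End R V where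
  toFun a := s ∘ₗ a ∘ₗ π + (LinearMap.id - s ∘ₗ π)
  map_one' := by ext; simp
  map_mul' a b := by
    have hs' (m : M) : π (s m) = m := LinearMap.congr_fun hs m
    ext x
    simp [hs']

theorem Module.End.extendOfRetraction_injective (π : V →ₗ[R] M) (s : M →ₗ[R] V)
    (hs : π ∘ₗ s = LinearMap.id) : Function.Injective (extendOfRetraction π s hs) := by
  have hs' (m : M) : π (s m) = m := LinearMap.congr_fun hs m
  have hrecover (a : Module.End R M) : π ∘ₗ extendOfRetraction π s hs a ∘ₗ s = a := by
    ext m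
    simp [extendOfRetraction, hs']
  intro a b hab
  rw [← hrecover a, hab, hrecover b]

end Retract

theorem Module.Projective.exists_injective_monoidHom_generalLinearGroup (R M : Type*) [CommRing R]
    [AddCommGroup M] [Module R M] [Module.Finite R M] [Module.Projective R M] :
    ∃ (n : ℕ) (j : (M ≃ₗ[R] M) →* GL (Fin (n + 1)) R), Function.Injective j := by
  obtain ⟨n, π₀, hπ₀⟩ := Module.Finite.exists_fin' R M
  let π : (Fin (n + 1) → R) →ₗ[R] M := π₀ ∘ₗ LinearMap.funLeft R R Fin.castSucc
  have hπ : Function.Surjective π :=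
    hπ₀.comp (LinearMap.funLeft_surjective_of_injective R R _ (Fin.castSucc_injective n))
  obtain ⟨s, hs⟩ := Module.projective_lifting_property π LinearMap.id hπ
  let E := Units.map (Module.End.extendOfRetraction π s hs)
  refine ⟨n, (Matrix.GeneralLinearGroup.toLin.symm.toMonoidHom.comp E).comp
    (LinearMap.GeneralLinearGroup.generalLinearEquiv R M).symm.toMonoidHom, ?_⟩
  exact Matrix.GeneralLinearGroup.toLin.symm.injective.comp
    ((Units.map_injective (Module.End.extendOfRetraction_injective π s hs)).comp
      (LinearMap.GeneralLinearGroup.generalLinearEquiv R M).symm.injective)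

/-- For a finitely generated group `Γ`, the following are equivalent:
(1) there exist a commutative unital ring `R`, a finitely generated projective `R`-module `M`
and a homomorphism `Γ → Aut_R(M)` whose image is not virtually solvable;
(2) there exist a commutative unital ring `R`, an integer `n ≥ 1` and a homomorphism
`Γ → GL_n(R)` whose image is not virtually solvable;
(3) there exist a field `K`, an integer `n ≥ 1` and a homomorphism `Γ → GL_n(K)` whose
image is not virtually solvable. -/
theorem ringLinear_iff_fieldLinear_notVirtuallySolvable
    (Γ : Type) [Group Γ] [Group.FG Γ] :
    ((∃ (R : Type) (_ : CommRing R) (M : Type) (_ : AddCommGroup M) (_ : Module R M),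
        Module.Finite R M ∧ Module.Projective R M ∧
        ∃ f : Γ →* (M ≃ₗ[R] M), ¬ IsVirtuallySolvable ↥f.range) ↔
      (∃ (R : Type) (_ : CommRing R) (n : ℕ), 1 ≤ n ∧
        ∃ f : Γ →* Matrix.GeneralLinearGroup (Fin n) R, ¬ IsVirtuallySolvable ↥f.range))
    ∧
    ((∃ (R : Type) (_ : CommRing R) (n : ℕ), 1 ≤ n ∧
        ∃ f : Γ →* Matrix.GeneralLinearGroup (Fin n) R, ¬ IsVirtuallySolvable ↥f.range) ↔
      (∃ (K : Type) (_ : Field K) (n : ℕ), 1 ≤ n ∧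
        ∃ f : Γ →* Matrix.GeneralLinearGroup (Fin n) K, ¬ IsVirtuallySolvable ↥f.range)) := by
  refine ⟨⟨?_, ?_⟩, ⟨?_, ?_⟩⟩
  · rintro ⟨R, _, M, _, _, _, _, f, hf⟩
    obtain ⟨n, j, hj⟩ := Module.Projective.exists_injective_monoidHom_generalLinearGroup R M
    exact ⟨R, _, n + 1, n.succ_pos, j.comp f, by rwa [isVirtuallySolvable_range_comp_iff f hj]⟩
  · rintro ⟨R, _, n, -, f, hf⟩
    let e := Matrix.GeneralLinearGroup.toLin.trans
      (LinearMap.GeneralLinearGroup.generalLinearEquiv R (Fin n → R))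
    exact ⟨R, _, Fin n → R, _, _, inferInstance, inferInstance, e.toMonoidHom.comp f,
      by rwa [isVirtuallySolvable_range_comp_iff f (j := e.toMonoidHom) e.injective]⟩
  · rintro ⟨R, _, n, hn, f, hf⟩
    obtain ⟨K, _, g, hg⟩ := exists_field_not_isVirtuallySolvable f hf
    exact ⟨K, _, n, hn, g, hg⟩
  · rintro ⟨K, _, n, hn, f, hf⟩
    exact ⟨K, inferInstance, n, hn, f, hf⟩
end

section
/- Let R be a commutative unital ring, let 𝔫 be the nilradical of R (the ideal of nilpotent elements), and let n ≥ 1. For each integer e ≥ 0 let G(e) denote the kernel of the natural group homomorphism GL_n(R) → GL_n(R/𝔫^e) induced by the quotient map R → R/𝔫^e. Then for all integers e, f ≥ 0, the commutator subgroup [G(e), G(f)] is contained in G(e+f). -/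
/-!
This holds for arbitrary ideals `I, J` in place of `𝔫^e, 𝔫^f`. If `A ≡ 1 mod I` and
`B ≡ 1 mod J`, then `[A, B] - 1 = (AB - BA) A⁻¹ B⁻¹`, and
`AB - BA = (A - 1)(B - 1) - (B - 1)(A - 1)` has all its entries in `I J`.
-/

open Matrix
open scoped commutatorElement

theorem Units.val_commutatorElement_sub_one {S : Type*} [Ring S] (a b : Sˣ) :
    ((⁅a, b⁆ : Sˣ) : S) - 1 = ((a - 1) * (b - 1) - (b - 1) * (a - 1)) * ↑a⁻¹ * ↑b⁻¹ := by
  have hab : ((a - 1) * (b - 1) - (b - 1) * (a - 1) : S) = a * b - b * a := by noncomm_ring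
  rw [hab, commutatorElement_def, sub_mul, sub_mul, mul_assoc (b : S), Units.mul_inv, mul_one,
    Units.mul_inv]
  simp only [Units.val_mul]

namespace Ideal

variable {R : Type*} [CommRing R] {n : Type*} [Fintype n] [DecidableEq n]

theorem mul_mem_matrix_of_mem_left {I : Ideal R} {M : Matrix n n R} (N : Matrix n n R)
    (hM : M ∈ I.matrix n) : M * N ∈ I.matrix n := fun i _ =>
  sum_mem _ fun k _ => I.mul_mem_right _ (hM i k)

theorem mul_mem_matrix_mul_s2 {I J : Ideal R} {M N : Matrix n n R}
    (hM : M ∈ I.matrix n) (hN : N ∈ J.matrix n) : M * N ∈ (I * J).matrix n := fun i j =>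
  sum_mem _ fun k _ => mul_mem_mul (hM i k) (hN k j)

theorem mem_ker_glMap_mk_iff (I : Ideal R) (A : GL n R) :
    A ∈ (GeneralLinearGroup.map (Quotient.mk I)).ker ↔ (A : Matrix n n R) - 1 ∈ I.matrix n := by
  simp only [MonoidHom.mem_ker, Units.ext_iff, ← Matrix.ext_iff, mem_matrix, Matrix.sub_apply,
    GeneralLinearGroup.map_apply, Units.val_one, one_apply, ← Quotient.eq_zero_iff_mem, map_sub]
  refine forall₂_congr fun i j => ?_
  split_ifs <;> simp [sub_eq_zero]

theorem commutator_ker_glMap_mk_le (I J : Ideal R) :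
    ⁅(GeneralLinearGroup.map (n := n) (Quotient.mk I)).ker,
      (GeneralLinearGroup.map (n := n) (Quotient.mk J)).ker⁆ ≤
      (GeneralLinearGroup.map (n := n) (Quotient.mk (I * J))).ker := by
  rw [Subgroup.commutator_le]
  intro A hA B hB
  rw [mem_ker_glMap_mk_iff] at hA hB ⊢
  rw [Units.val_commutatorElement_sub_one]
  refine mul_mem_matrix_of_mem_left _ (mul_mem_matrix_of_mem_left _ (sub_mem ?_ ?_))
  · exact mul_mem_matrix_mul_s2 hA hB
  · exact mul_comm I J ▸ mul_mem_matrix_mul_s2 hB hA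

end Ideal

theorem commutator_ker_glMap_nilradical_pow_le_general
    (R : Type) [CommRing R] (n : ℕ)
    (G : ℕ → Subgroup (Matrix.GeneralLinearGroup (Fin n) R))
    (hG : ∀ e : ℕ, G e =
      (Matrix.GeneralLinearGroup.map
        (Ideal.Quotient.mk ((nilradical R) ^ e)) :
          Matrix.GeneralLinearGroup (Fin n) R →*
            Matrix.GeneralLinearGroup (Fin n) (R ⧸ (nilradical R) ^ e)).ker)
    (e f : ℕ) :
    ⁅G e, G f⁆ ≤ G (e + f) := by
  rw [hG, hG, hG, pow_add]
  exact Ideal.commutator_ker_glMap_mk_le _ _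

/-- For a commutative unital ring `R` with nilradical `𝔫`, and `G (e)` the kernel of
`GL_n(R) → GL_n(R/𝔫^e)`, one has `[G(e), G(f)] ≤ G(e+f)` for all `e, f ≥ 0`. -/
theorem commutator_ker_glMap_nilradical_pow_le
    (R : Type) [CommRing R] (n : ℕ) (hn : 1 ≤ n)
    (G : ℕ → Subgroup (Matrix.GeneralLinearGroup (Fin n) R))
    (hG : ∀ e : ℕ, G e =
      (Matrix.GeneralLinearGroup.map
        (Ideal.Quotient.mk ((nilradical R) ^ e)) :
          Matrix.GeneralLinearGroup (Fin n) R →*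
            Matrix.GeneralLinearGroup (Fin n) (R ⧸ (nilradical R) ^ e)).ker)
    (e f : ℕ) :
    ⁅G e, G f⁆ ≤ G (e + f) :=
  commutator_ker_glMap_nilradical_pow_le_general R n G hG e f
end

section
/- Let p be a prime, let q₀ be a positive power of p and let q = q₀^e be a positive power of q₀, where q₀ ≢ 1 (mod 3) and e ≢ 0 (mod 3). Set n₀ = q₀² + q₀ + 1 and n = q² + q + 1. Then n₀ divides n, and there exist difference sets D₀ ⊆ ℤ/n₀ℤ and D ⊆ ℤ/nℤ such that 0, 1 ∈ D₀ and such that for every d ∈ D₀ the element (n/n₀)·d̃ of ℤ/nℤ lies in D, where d̃ ∈ {0, …, n₀−1} denotes the integer representative of d. -/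
/-- A subset `D` of `ℤ/mℤ` is a difference set if every nonzero element `a` can be written
in exactly one way as `a = d₁ − d₂` with `d₁, d₂ ∈ D`. -/
def IsDifferenceSet {m : ℕ} (D : Set (ZMod m)) : Prop :=
  ∀ a : ZMod m, a ≠ 0 → ∃! p : ZMod m × ZMod m, p.1 ∈ D ∧ p.2 ∈ D ∧ p.1 - p.2 = a

/-!
For a cubic field extension `L / F`, the quotient group `Lˣ ⧸ Fˣ` is the set of points of the
projective plane `ℙ_F(L)`, and a plane `W ⊆ L` (an `F`-subspace of dimension 2) is a line in it.
Singer's observation: for `v ∉ F`, the pairs of points `([x], [y])` of the line with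
`[x] / [y] = [v]` correspond to the points of `W ∩ v⁻¹ W`, and this is a single point, since
`W ∩ v⁻¹ W` has dimension at least `2 + 2 - 3 = 1` and cannot be `W`: a plane stable under
multiplication by `v` would be a module over `F(v) = L`. For finite fields `Lˣ ⧸ Fˣ` is cyclic of
order `q² + q + 1`, so a line is a difference set in `ℤ/(q² + q + 1)`.

Take `K = 𝔽_{q₀} ⊆ L₀ = 𝔽_{q₀³}` and `K ⊆ F = 𝔽_q ⊆ L = 𝔽_{q³}` with `L₀ ⊆ L`. As `[L₀ : K] = 3`
is prime to `e = [F : K]`, we get `L₀ ∩ F = K`, so `L₀ˣ ⧸ Kˣ` embeds into `Lˣ ⧸ Fˣ` (whence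
`n₀ ∣ n`). If `g` generates the large group, `g^(n/n₀)` is the image of a generator `[u]` of the
small one; the lines through `1` and `u` in both planes give the compatible difference sets.
-/

open Module IntermediateField

def IsMulDifferenceSet {G : Type*} [Group G] (D : Set G) : Prop :=
  ∀ c : G, c ≠ 1 → ∃! p : G × G, p.1 ∈ D ∧ p.2 ∈ D ∧ p.1 / p.2 = c

theorem IsMulDifferenceSet.isDifferenceSet_preimage {G : Type*} [Group G] {m : ℕ}
    (e : Multiplicative (ZMod m) ≃* G) {D : Set G} (hD : IsMulDifferenceSet D) :
    IsDifferenceSet {a : ZMod m | e (.ofAdd a) ∈ D} := by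
  intro a ha
  let σ := Multiplicative.ofAdd.trans e.toEquiv
  have hc : e (.ofAdd a) ≠ 1 := by rwa [Ne, e.map_eq_one_iff, ofAdd_eq_one]
  refine (σ.prodCongr σ).existsUnique_congr (fun p => ?_) |>.2 (hD _ hc)
  simp [σ, ← map_div, ← ofAdd_sub]

section ProjectivePlane

variable {F L : Type*} [Field F] [Field L] [Algebra F L]

theorem Submodule.mem_range_algebraMap_of_mul_mem (hL : (finrank F L).Prime)
    {W : Submodule F L} (hW₀ : W ≠ ⊥) (hW : W ≠ ⊤) {v : L} (hv : ∀ w ∈ W, v * w ∈ W) :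
    v ∈ (algebraMap F L).range := by
  have : FiniteDimensional F L := Module.finite_of_finrank_pos hL.pos
  by_contra hvF
  have hadjoin : F⟮v⟯ = ⊤ := by
    have hdvd : finrank F F⟮v⟯ ∣ finrank F L := by
      rw [adjoin.finrank (.of_finite F v)]
      exact minpoly.degree_dvd (.of_finite F v)
    rcases hL.eq_one_or_self_of_dvd _ hdvd with h | h
    · rw [IntermediateField.finrank_eq_one_iff, adjoin_simple_eq_bot_iff,
        IntermediateField.mem_bot] at h
      exact absurd h hvF
    · refine IntermediateField.eq_of_le_of_finrank_eq le_top ?_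
      rw [h, finrank_top']
  have hstab : ∀ z ∈ Algebra.adjoin F {v}, ∀ w ∈ W, z * w ∈ W := by
    intro z hz
    induction hz using Algebra.adjoin_induction with
    | mem x hx => rw [Set.mem_singleton_iff.1 hx]; exact hv
    | algebraMap r => intro w hw; rw [← Algebra.smul_def]; exact W.smul_mem r hw
    | add x y _ _ hx hy => intro w hw; rw [add_mul]; exact W.add_mem (hx w hw) (hy w hw)
    | mul x y _ _ hx hy => intro w hw; rw [mul_assoc]; exact hx _ (hy w hw)
  obtain ⟨w, hw, hw0⟩ := W.exists_mem_ne_zero_of_ne_bot hW₀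
  refine hW (eq_top_iff.2 fun z _ => ?_)
  have hz : z * w⁻¹ ∈ Algebra.adjoin F {v} := by
    rw [← adjoin_simple_toSubalgebra_of_isAlgebraic (.of_finite F v), hadjoin]
    trivial
  simpa [hw0] using hstab _ hz w hw

theorem Submodule.finrank_inf_comap_mulLeft_eq_one (hL : finrank F L = 3) {W : Submodule F L}
    (hW : finrank F W = 2) {v : L} (hv : v ∉ (algebraMap F L).range) :
    finrank F ↥(W ⊓ W.comap (LinearMap.mulLeft F v)) = 1 := by
  have : FiniteDimensional F L := Module.finite_of_finrank_pos (by omega)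
  have hv0 : v ≠ 0 := by rintro rfl; exact hv (zero_mem _)
  have hle : finrank F ↥(W ⊓ W.comap (LinearMap.mulLeft F v)) ≤ 1 := by
    have hlt : W ⊓ W.comap (LinearMap.mulLeft F v) < W := by
      refine lt_of_le_of_ne inf_le_left fun hU => ?_
      refine hv (mem_range_algebraMap_of_mul_mem (W := W) (by rw [hL]; norm_num) ?_ ?_
        fun w hw => ?_)
      · rintro rfl; simp at hW
      · rintro rfl; rw [finrank_top] at hW; omega
      · exact (hU.ge hw).2
    have := Submodule.finrank_lt_finrank_of_lt hlt
    omega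
  have hcomap : finrank F ↥(W.comap (LinearMap.mulLeft F v)) = 2 := by
    let e : L ≃ₗ[F] L := LinearEquiv.ofBijective (LinearMap.mulLeft F v)
      ⟨mul_right_injective₀ hv0, fun y => ⟨v⁻¹ * y, by simp [hv0]⟩⟩
    rw [show LinearMap.mulLeft F v = (e : L →ₗ[F] L) from rfl,
      Submodule.comap_equiv_eq_map_symm, LinearEquiv.finrank_map_eq, hW]
  have := Submodule.finrank_sup_add_finrank_inf_eq W (W.comap (LinearMap.mulLeft F v))
  have := Submodule.finrank_le (W ⊔ W.comap (LinearMap.mulLeft F v))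
  omega

variable (F L) in
def scalarUnits : Subgroup Lˣ := (Units.map (algebraMap F L : F →* L)).range

theorem scalarUnits.mem_iff {x : Lˣ} :
    x ∈ scalarUnits F L ↔ (x : L) ∈ (algebraMap F L).range := by
  constructor
  · rintro ⟨t, rfl⟩
    exact ⟨t, rfl⟩
  · rintro ⟨t, ht⟩
    have ht0 : t ≠ 0 := by rintro rfl; exact x.ne_zero (by simpa using ht.symm)
    exact ⟨Units.mk0 t ht0, Units.ext ht⟩

theorem scalarUnits.mk_eq_one_iff {x : Lˣ} :
    (x : Lˣ ⧸ scalarUnits F L) = 1 ↔ (x : L) ∈ (algebraMap F L).range := by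
  rw [QuotientGroup.eq_one_iff, scalarUnits.mem_iff]

theorem scalarUnits.mk_eq_mk_iff {x y : Lˣ} :
    (x : Lˣ ⧸ scalarUnits F L) = y ↔ ∃ t : F, (y : L) = algebraMap F L t * x := by
  rw [QuotientGroup.eq, scalarUnits.mem_iff]
  constructor
  · rintro ⟨t, ht⟩
    exact ⟨t, by rw [ht, Units.val_mul, Units.val_inv_eq_inv_val]; field_simp⟩
  · rintro ⟨t, ht⟩
    exact ⟨t, by rw [Units.val_mul, Units.val_inv_eq_inv_val, ht]; field_simp⟩

def Submodule.projectivize (W : Submodule F L) : Set (Lˣ ⧸ scalarUnits F L) :=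
  QuotientGroup.mk '' {x : Lˣ | (x : L) ∈ W}

theorem Submodule.mk_eq_mk_of_finrank_eq_one {U : Submodule F L} (hU : finrank F U = 1)
    {x y : Lˣ} (hx : (x : L) ∈ U) (hy : (y : L) ∈ U) : (x : Lˣ ⧸ scalarUnits F L) = y := by
  obtain ⟨t, ht⟩ := (finrank_eq_one_iff_of_nonzero' (⟨x, hx⟩ : U) (by simp)).1 hU ⟨y, hy⟩
  refine scalarUnits.mk_eq_mk_iff.2 ⟨t, ?_⟩
  simpa [Algebra.smul_def] using (congrArg Subtype.val ht).symm

theorem Submodule.isMulDifferenceSet_projectivize (hL : finrank F L = 3) {W : Submodule F L}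
    (hW : finrank F W = 2) : IsMulDifferenceSet W.projectivize := by
  intro c hc
  obtain ⟨v, rfl⟩ := QuotientGroup.mk_surjective c
  have hU := finrank_inf_comap_mulLeft_eq_one hL hW (v := v)
    fun h => hc (scalarUnits.mk_eq_one_iff.2 h)
  obtain ⟨y, hyU, hy0⟩ := (W ⊓ W.comap (LinearMap.mulLeft F (v : L))).exists_mem_ne_zero_of_ne_bot
    fun h => by rw [h, finrank_bot] at hU; exact zero_ne_one hU
  refine ⟨(QuotientGroup.mk (v * Units.mk0 y hy0), QuotientGroup.mk (Units.mk0 y hy0)),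
    ⟨⟨_, hyU.2, rfl⟩, ⟨_, hyU.1, rfl⟩, by simp⟩, ?_⟩
  -- any solution `([x], [y'])` has `v y' ∈ F x ⊆ W`, so `y'` lies on the line `W ∩ v⁻¹ W` too
  rintro ⟨_, _⟩ ⟨⟨x, hx, rfl⟩, ⟨y', hy', rfl⟩, hxy⟩
  have hvy' : (x : Lˣ ⧸ scalarUnits F L) = (v * y' : Lˣ) := by
    rw [QuotientGroup.mk_mul, ← hxy, div_mul_cancel]
  obtain ⟨t, ht⟩ := scalarUnits.mk_eq_mk_iff.1 hvy'
  have hy'U : (y' : L) ∈ W ⊓ W.comap (LinearMap.mulLeft F (v : L)) :=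
    ⟨hy', by
      show (v : L) * y' ∈ W
      rw [← Units.val_mul, ht, ← Algebra.smul_def]
      exact W.smul_mem t hx⟩
  have hyy' := mk_eq_mk_of_finrank_eq_one hU hy'U (y := Units.mk0 y hy0) hyU
  rw [Prod.mk.injEq, hyy', hvy', QuotientGroup.mk_mul, QuotientGroup.mk_mul, hyy']
  exact ⟨rfl, rfl⟩

theorem natCard_quotient_scalarUnits [Finite L] (hL : finrank F L = 3) :
    Nat.card (Lˣ ⧸ scalarUnits F L) = Nat.card F ^ 2 + Nat.card F + 1 := by
  have : Finite F := Finite.of_injective _ (algebraMap F L).injective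
  have : FiniteDimensional F L := .of_finite
  have hS : Nat.card (scalarUnits F L) = Nat.card F - 1 :=
    (Nat.card_congr (MonoidHom.ofInjective
      (Units.map_injective (algebraMap F L).injective)).toEquiv).symm.trans (Nat.card_units F)
  have h := (scalarUnits F L).card_eq_card_quotient_mul_card_subgroup
  rw [Nat.card_units, natCard_eq_pow_finrank (K := F), hL, hS] at h
  have hq : 1 < Nat.card F := Finite.one_lt_card
  refine Nat.eq_of_mul_eq_mul_right (by omega : 0 < Nat.card F - 1) ?_
  rw [← h]
  zify [hq.le, Nat.one_le_pow 3 _ (by omega : 0 < Nat.card F)]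
  ring

theorem finrank_span_one_pair {u : L} (hu : u ∉ (algebraMap F L).range) :
    finrank F (Submodule.span F {1, u}) = 2 := by
  have hli : LinearIndependent F ![1, u] := by
    refine LinearIndependent.pair_iff.2 fun s t hst => ?_
    by_cases ht : t = 0
    · subst ht
      simpa using hst
    · refine absurd ⟨-s / t, ?_⟩ hu
      rw [Algebra.smul_def, Algebra.smul_def, mul_one] at hst
      rw [map_div₀, map_neg, div_eq_iff (by simpa using ht)]
      linear_combination -hst
  rw [← Matrix.range_cons_cons_empty 1 u ![], finrank_span_eq_card hli, Fintype.card_fin]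

end ProjectivePlane

section Compatible

variable {K F L₀ L : Type*} [Field K] [Field F] [Field L₀] [Field L] [Algebra K F] [Algebra K L₀]
  [Algebra K L] [Algebra F L] [IsScalarTower K F L]

theorem AlgHom.mem_range_of_coprime_finrank [FiniteDimensional K L₀] [FiniteDimensional K F]
    (hcop : (finrank K L₀).Coprime (finrank K F)) (j : L₀ →ₐ[K] L) {x : L₀}
    (hx : j x ∈ (algebraMap F L).range) : x ∈ (algebraMap K L₀).range := by
  obtain ⟨y, hy⟩ := hx
  have hxy : minpoly K x = minpoly K y := by
    rw [← minpoly.algHom_eq j j.injective, ← hy,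
      ← minpoly.algHom_eq (IsScalarTower.toAlgHom K F L) (algebraMap F L).injective y]
    rfl
  rw [← minpoly.natDegree_eq_one_iff]
  exact Nat.eq_one_of_dvd_coprimes hcop (minpoly.degree_dvd (.of_finite K x))
    (hxy ▸ minpoly.degree_dvd (.of_finite K y))

variable (F) in
def AlgHom.unitsQuotientMap (j : L₀ →ₐ[K] L) :
    L₀ˣ ⧸ scalarUnits K L₀ →* Lˣ ⧸ scalarUnits F L :=
  QuotientGroup.map _ _ (Units.map (j : L₀ →* L)) <| by
    rintro _ ⟨t, rfl⟩
    refine scalarUnits.mem_iff.2 ⟨algebraMap K F t, ?_⟩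
    simp [← IsScalarTower.algebraMap_apply]

theorem AlgHom.unitsQuotientMap_injective (j : L₀ →ₐ[K] L)
    (hj : ∀ x, j x ∈ (algebraMap F L).range → x ∈ (algebraMap K L₀).range) :
    Function.Injective (j.unitsQuotientMap F) := by
  refine (injective_iff_map_eq_one _).2 fun c hc => ?_
  induction c using QuotientGroup.induction_on with
  | H x => exact scalarUnits.mk_eq_one_iff.2 (hj x (scalarUnits.mk_eq_one_iff.1 hc))

theorem AlgHom.mapsTo_projectivize (j : L₀ →ₐ[K] L) {W₀ : Submodule K L₀} {W : Submodule F L}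
    (hW : W₀.map j.toLinearMap ≤ W.restrictScalars K) :
    Set.MapsTo (j.unitsQuotientMap F) W₀.projectivize W.projectivize := by
  rintro _ ⟨x, hx, rfl⟩
  exact ⟨Units.map (j : L₀ →* L) x, hW ⟨x, hx, rfl⟩, rfl⟩

end Compatible

theorem MonoidHom.mem_range_of_pow_card_eq_one {G H : Type*} [Group G] [Finite G] [CommGroup H]
    [Finite H] [IsCyclic H] {ι : G →* H} (hι : Function.Injective ι) {x : H}
    (hx : x ^ Nat.card G = 1) : x ∈ ι.range := by
  have hle : ι.range ≤ (powMonoidHom (Nat.card G) : H →* H).ker := by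
    rintro _ ⟨y, rfl⟩
    simp [← map_pow]
  have hcard : Nat.card (powMonoidHom (Nat.card G) : H →* H).ker ≤ Nat.card ι.range := by
    rw [IsCyclic.card_powMonoidHom_ker, Nat.gcd_eq_right (Subgroup.card_dvd_of_injective ι hι),
      ← Nat.card_congr (MonoidHom.ofInjective hι).toEquiv]
  rw [Subgroup.eq_of_le_of_card_ge hle hcard]
  exact hx

theorem IsCyclic.exists_generator_map_eq_pow {G H : Type*} [Group G] [Finite G] [CommGroup H]
    [Finite H] [IsCyclic H] {ι : G →* H} (hι : Function.Injective ι) {g : H}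
    (hg : ∀ x, x ∈ Subgroup.zpowers g) :
    ∃ g₀ : G, (∀ x, x ∈ Subgroup.zpowers g₀) ∧ ι g₀ = g ^ (Nat.card H / Nat.card G) := by
  have hdvd := Subgroup.card_dvd_of_injective ι hι
  obtain ⟨g₀, hg₀⟩ := MonoidHom.mem_range_of_pow_card_eq_one hι
    (x := g ^ (Nat.card H / Nat.card G))
    (by rw [← pow_mul, Nat.div_mul_cancel hdvd, pow_card_eq_one'])
  have horder : orderOf g₀ = Nat.card G := by
    rw [← orderOf_injective ι hι, hg₀, orderOf_pow_of_dvd, orderOf_eq_card_of_forall_mem_zpowers hg,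
      Nat.div_div_self hdvd Nat.card_pos.ne']
    · exact (Nat.div_pos (Nat.le_of_dvd Nat.card_pos hdvd) Nat.card_pos).ne'
    · rw [orderOf_eq_card_of_forall_mem_zpowers hg]
      exact Nat.div_dvd_of_dvd hdvd
  refine ⟨g₀, fun x => ?_, hg₀⟩
  rw [Subgroup.eq_top_of_card_eq (Subgroup.zpowers g₀) (by rw [Nat.card_zpowers, horder])]
  trivial

theorem zmodMulEquivOfGenerator_apply_ofAdd_natCast {G : Type*} [Group G] {g : G}
    (hg : ∀ x, x ∈ Subgroup.zpowers g) {n : ℕ} (hn : Nat.card G = n) (m : ℕ) :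
    zmodMulEquivOfGenerator hg hn (.ofAdd (m : ZMod n)) = g ^ m := by
  simpa using zmodMulEquivOfGenerator_apply_ofAdd_intCast hg hn m

theorem exists_compatible_difference_sets_of_algHom {K F L₀ L : Type*} [Field K] [Field F]
    [Field L₀] [Field L] [Algebra K F] [Algebra K L₀] [Algebra K L] [Algebra F L]
    [IsScalarTower K F L] [Finite L] (hL₀ : finrank K L₀ = 3) (hL : finrank F L = 3)
    (hcop : (finrank K L₀).Coprime (finrank K F)) (j : L₀ →ₐ[K] L) {n₀ n : ℕ}
    (hn₀ : Nat.card K ^ 2 + Nat.card K + 1 = n₀) (hn : Nat.card F ^ 2 + Nat.card F + 1 = n) :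
    n₀ ∣ n ∧
    ∃ (D₀ : Set (ZMod n₀)) (D : Set (ZMod n)),
      IsDifferenceSet D₀ ∧ IsDifferenceSet D ∧
      (0 : ZMod n₀) ∈ D₀ ∧ (1 : ZMod n₀) ∈ D₀ ∧
      ∀ d ∈ D₀, ((n / n₀ * d.val : ℕ) : ZMod n) ∈ D := by
  have : Finite L₀ := .of_injective _ j.injective
  have : Finite F := .of_injective _ (algebraMap F L).injective
  have : FiniteDimensional K L₀ := .of_finite
  have : FiniteDimensional K F := .of_finite
  have hj : ∀ x, j x ∈ (algebraMap F L).range → x ∈ (algebraMap K L₀).range :=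
    fun _ => j.mem_range_of_coprime_finrank hcop
  have hC₀ := (natCard_quotient_scalarUnits hL₀).trans hn₀
  have hC := (natCard_quotient_scalarUnits hL).trans hn
  have hι := j.unitsQuotientMap_injective hj
  obtain ⟨g, hg⟩ := IsCyclic.exists_generator (α := Lˣ ⧸ scalarUnits F L)
  obtain ⟨g₀, hg₀, hιg₀⟩ := IsCyclic.exists_generator_map_eq_pow (H := Lˣ ⧸ scalarUnits F L) hι hg
  rw [hC, hC₀] at hιg₀
  obtain ⟨u, rfl⟩ := QuotientGroup.mk_surjective g₀
  have hu : (u : L₀) ∉ (algebraMap K L₀).range := fun h => by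
    have : Finite K := .of_injective _ (algebraMap K L₀).injective
    have horder := orderOf_eq_card_of_forall_mem_zpowers hg₀
    rw [scalarUnits.mk_eq_one_iff.2 h, orderOf_one, hC₀] at horder
    have := Nat.card_pos (α := K)
    omega
  let W₀ := Submodule.span K {1, (u : L₀)}
  let W := Submodule.span F {1, j u}
  have hmaps : Set.MapsTo (j.unitsQuotientMap F) W₀.projectivize W.projectivize := by
    refine j.mapsTo_projectivize ?_
    rw [Submodule.map_span, Set.image_pair, AlgHom.toLinearMap_apply, map_one]
    exact Submodule.span_le_restrictScalars K F _
  let e₀ := zmodMulEquivOfGenerator hg₀ hC₀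
  let e := zmodMulEquivOfGenerator hg hC
  have : NeZero n₀ := ⟨by omega⟩
  refine ⟨hC₀ ▸ hC ▸ Subgroup.card_dvd_of_injective _ hι, _, _,
    (W₀.isMulDifferenceSet_projectivize hL₀ (finrank_span_one_pair hu)).isDifferenceSet_preimage e₀,
    (W.isMulDifferenceSet_projectivize hL (finrank_span_one_pair fun h => hu (hj _ h))
      ).isDifferenceSet_preimage e, ?_, ?_, fun d hd => ?_⟩
  · show e₀ (.ofAdd 0) ∈ W₀.projectivize
    rw [ofAdd_zero, map_one]
    exact ⟨1, Submodule.subset_span (by simp), rfl⟩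
  · show e₀ (.ofAdd 1) ∈ W₀.projectivize
    rw [zmodMulEquivOfGenerator_apply_ofAdd_one]
    exact ⟨u, Submodule.subset_span (by simp), rfl⟩
  · show e (.ofAdd ((n / n₀ * d.val : ℕ) : ZMod n)) ∈ W.projectivize
    rw [zmodMulEquivOfGenerator_apply_ofAdd_natCast, pow_mul, ← hιg₀, ← map_pow,
      ← zmodMulEquivOfGenerator_apply_ofAdd_natCast hg₀ hC₀, ZMod.natCast_zmod_val]
    exact hmaps hd

open FiniteField in
theorem exists_compatible_difference_sets_general
    (p k e : ℕ) (hp : p.Prime) (hk : 1 ≤ k)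
    (q₀ q n₀ n : ℕ) (hq₀ : q₀ = p ^ k) (hq : q = q₀ ^ e)
    (he3 : e % 3 ≠ 0)
    (hn₀ : n₀ = q₀ ^ 2 + q₀ + 1) (hn : n = q ^ 2 + q + 1) :
    n₀ ∣ n ∧
    ∃ (D₀ : Set (ZMod n₀)) (D : Set (ZMod n)),
      IsDifferenceSet D₀ ∧ IsDifferenceSet D ∧
      (0 : ZMod n₀) ∈ D₀ ∧ (1 : ZMod n₀) ∈ D₀ ∧
      ∀ d ∈ D₀, ((n / n₀ * d.val : ℕ) : ZMod n) ∈ D := by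
  have := Fact.mk hp
  have : NeZero e := ⟨by omega⟩
  let K := GaloisField p k
  have hK : Nat.card K = q₀ := by rw [GaloisField.card p k (by omega), hq₀]
  obtain ⟨f⟩ := nonempty_algHom_of_finrank_dvd (F := K) (K := Extension K p e)
    (L := Extension K p (3 * e)) (by simp [finrank_extension])
  obtain ⟨j⟩ := nonempty_algHom_of_finrank_dvd (F := K) (K := Extension K p 3)
    (L := Extension K p (3 * e)) (by simp [finrank_extension])
  let := f.toAlgebra
  have : IsScalarTower K (Extension K p e) (Extension K p (3 * e)) :=
    .of_algebraMap_eq fun x => (f.commutes x).symm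
  have hF : Nat.card (Extension K p e) = q := by rw [natCard_extension, hK, hq]
  have hL : finrank (Extension K p e) (Extension K p (3 * e)) = 3 := by
    have h := natCard_eq_pow_finrank (K := Extension K p e) (V := Extension K p (3 * e))
    rw [natCard_extension, hF, hK, pow_mul', ← hq] at h
    have hq2 : 2 ≤ q := Finite.one_lt_card (α := Extension K p e) |>.trans_eq hF
    exact (Nat.pow_right_injective hq2 h).symm
  refine exists_compatible_difference_sets_of_algHom (finrank_extension K p 3) hL ?_ j
    (by rw [hK, hn₀]) (by rw [hF, hn])
  rw [finrank_extension, finrank_extension, Nat.Prime.coprime_iff_not_dvd Nat.prime_three]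
  omega

/-- Let `p` be a prime, `q₀ = p^k` (`k ≥ 1`), `q = q₀^e` (`e ≥ 1`), with `q₀ ≢ 1 (mod 3)`
and `e ≢ 0 (mod 3)`.  Set `n₀ = q₀² + q₀ + 1` and `n = q² + q + 1`.  Then `n₀ ∣ n`, and
there exist difference sets `D₀ ⊆ ℤ/n₀ℤ` and `D ⊆ ℤ/nℤ` with `0, 1 ∈ D₀` and such that
`(n/n₀)·d ∈ D` for every `d ∈ D₀` (computed from the integer representative of `d`). -/
theorem exists_compatible_difference_sets
    (p k e : ℕ) (hp : p.Prime) (hk : 1 ≤ k) (he : 1 ≤ e)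
    (q₀ q n₀ n : ℕ) (hq₀ : q₀ = p ^ k) (hq : q = q₀ ^ e)
    (hq3 : q₀ % 3 ≠ 1) (he3 : e % 3 ≠ 0)
    (hn₀ : n₀ = q₀ ^ 2 + q₀ + 1) (hn : n = q ^ 2 + q + 1) :
    n₀ ∣ n ∧
    ∃ (D₀ : Set (ZMod n₀)) (D : Set (ZMod n)),
      IsDifferenceSet D₀ ∧ IsDifferenceSet D ∧
      (0 : ZMod n₀) ∈ D₀ ∧ (1 : ZMod n₀) ∈ D₀ ∧
      ∀ d ∈ D₀, ((n / n₀ * d.val : ℕ) : ZMod n) ∈ D :=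
  exists_compatible_difference_sets_general p k e hp hk q₀ q n₀ n hq₀ hq he3 hn₀ hn
end

section
/- Let q = 2^e with e ≥ 1 and e ≢ 0 (mod 3), and set n = q² + q + 1. Then 7 divides n, and there exists a difference set D ⊆ ℤ/nℤ containing the three elements 0, n/7 and 3n/7 (where n/7 and 3n/7 are the integers n/7 and 3n/7 viewed in ℤ/nℤ). -/
open Polynomial

lemma Nat.pow_three_sub_one (q : ℕ) : q ^ 3 - 1 = (q ^ 2 + q + 1) * (q - 1) := by
  cases q with
  | zero => rfl
  | succ q => simp only [Nat.add_sub_cancel]; ring_nf; omega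

lemma Nat.two_pow_mod_seven {e : ℕ} (he : e % 3 ≠ 0) : 2 ^ e % 7 = 2 ∨ 2 ^ e % 7 = 4 := by
  rw [← Nat.mod_add_div e 3, pow_add, pow_mul, Nat.mul_mod, Nat.pow_mod]
  rcases (by omega : e % 3 = 1 ∨ e % 3 = 2) with h | h <;> simp [h, Nat.pow_mod]

lemma Nat.seven_dvd_sq_add_self_add_one {q : ℕ} (hq : q % 7 = 2 ∨ q % 7 = 4) :
    7 ∣ q ^ 2 + q + 1 := by
  rw [Nat.dvd_iff_mod_eq_zero, Nat.add_mod, Nat.add_mod (q ^ 2), Nat.pow_mod]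
  rcases hq with h | h <;> simp [h]

lemma pow_two_pow_eq_pow_two_pow_mod_three {M : Type*} [Monoid M] {x : M} (hx : x ^ 8 = x)
    (m : ℕ) : x ^ 2 ^ m = x ^ 2 ^ (m % 3) := by
  have h8 : ∀ y : M, y ^ 8 = y → ∀ k : ℕ, y ^ 8 ^ k = y := by
    intro y hy k
    induction k with
    | zero => rw [pow_zero, pow_one]
    | succ k ih => rw [pow_succ, pow_mul, ih, hy]
  conv_lhs => rw [← Nat.mod_add_div m 3, pow_add, pow_mul, pow_mul]
  exact h8 _ (by rw [← pow_mul, mul_comm, pow_mul, hx]) _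

namespace Polynomial

lemma ncard_le_natDegree_of_isRoot {K : Type*} [CommRing K] [IsDomain K] {P : K[X]} (hP : P ≠ 0)
    {S : Set K} (hS : ∀ x ∈ S, P.IsRoot x) : S.ncard ≤ P.natDegree := by
  classical
  have hsub : S ⊆ P.roots.toFinset := fun x hx => by simpa [hP] using hS x hx
  calc S.ncard ≤ (P.roots.toFinset : Set K).ncard :=
        Set.ncard_le_ncard hsub (Finset.finite_toSet _)
    _ = P.roots.toFinset.card := Set.ncard_coe_finset _
    _ ≤ P.natDegree := (Multiset.toFinset_card_le _).trans (card_roots' P)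

lemma ncard_setOf_mul_add_mul_pow_eq_zero_le {K : Type*} [Field K] {q : ℕ} (hq : 1 < q)
    (a : K) {b : K} (hb : b ≠ 0) : {x : K | a * x + b * x ^ q = 0}.ncard ≤ q := by
  set P : K[X] := C a * X + C b * X ^ q
  have hcoeff : P.coeff q = b := by simp [P, coeff_X, hq.ne]
  have hP : P ≠ 0 := fun h => hb (by simpa [h] using hcoeff.symm)
  have hdeg : P.natDegree ≤ q := by
    refine (natDegree_add_le _ _).trans (max_le ?_ ?_)
    · exact (natDegree_C_mul_le _ _).trans (by simp; omega)
    · exact (natDegree_C_mul_le _ _).trans (by simp)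
  exact (ncard_le_natDegree_of_isRoot hP fun x hx => by simpa [P] using hx).trans hdeg

end Polynomial

namespace FiniteField

variable {F : Type*} [Field F] [Fintype F]

lemma one_lt_of_card_eq_pow_three {q : ℕ} (hcard : Fintype.card F = q ^ 3) : 1 < q := by
  have := Fintype.one_lt_card (α := F)
  by_contra! h
  interval_cases q <;> simp_all

lemma ncard_setOf_pow_eq_self {q : ℕ} (hq : 1 < q) (hdvd : q - 1 ∣ Fintype.card F - 1) :
    {c : F | c ^ q = c}.ncard = q := by
  classical
  refine le_antisymm ?_ ?_
  · refine le_trans (Set.ncard_le_ncard (fun c hc => ?_) (Set.toFinite _))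
      (ncard_setOf_mul_add_mul_pow_eq_zero_le hq (-1) one_ne_zero)
    simp only [Set.mem_ofPred_eq] at hc ⊢
    rw [hc]; ring
  obtain ⟨g, hg⟩ := IsCyclic.exists_generator (α := Fˣ)
  have hcard : 0 < Fintype.card F - 1 := by have := Fintype.one_lt_card (α := F); omega
  have hg_ord : orderOf (g : F) = Fintype.card F - 1 := by
    rw [orderOf_units, orderOf_eq_card_of_forall_mem_zpowers hg, Nat.card_eq_fintype_card,
      Fintype.card_units]
  have hζ : IsPrimitiveRoot ((g : F) ^ ((Fintype.card F - 1) / (q - 1))) (q - 1) := by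
    have := (IsPrimitiveRoot.orderOf (g : F)).pow_of_dvd
      (Nat.div_pos (Nat.le_of_dvd hcard hdvd) (by omega)).ne'
      (by rw [hg_ord]; exact Nat.div_dvd_of_dvd hdvd)
    rwa [hg_ord, Nat.div_div_self hdvd hcard.ne'] at this
  set μ := nthRootsFinset (q - 1) (1 : F)
  have h0 : (0 : F) ∉ μ := by
    rw [mem_nthRootsFinset (by omega), zero_pow (by omega)]; exact zero_ne_one
  have hsub : (↑(insert 0 μ) : Set F) ⊆ {c : F | c ^ q = c} := by
    intro c hc
    rcases Finset.mem_insert.mp hc with rfl | hc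
    · exact zero_pow (by omega)
    · rw [mem_nthRootsFinset (by omega)] at hc
      rw [Set.mem_ofPred_eq, ← Nat.sub_add_cancel hq.le, pow_succ, hc, one_mul]
  calc q = (insert 0 μ).card := by
        rw [Finset.card_insert_of_notMem h0, hζ.card_nthRootsFinset]; omega
    _ = (↑(insert 0 μ) : Set F).ncard := (Set.ncard_coe_finset _).symm
    _ ≤ _ := Set.ncard_le_ncard hsub (Set.toFinite _)

lemma ncard_setOf_pow_eq_self_of_card_eq_pow_three {q : ℕ} (hcard : Fintype.card F = q ^ 3) :
    {c : F | c ^ q = c}.ncard = q :=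
  ncard_setOf_pow_eq_self (one_lt_of_card_eq_pow_three hcard)
    (by rw [hcard, Nat.pow_three_sub_one]; exact dvd_mul_left _ _)

lemma exists_cube_add_self_add_one_eq_zero [CharP F 2] (h7 : 7 ∣ Fintype.card F - 1) :
    ∃ δ : F, δ ^ 3 + δ + 1 = 0 := by
  classical
  have : Fact (Nat.Prime 7) := ⟨by norm_num⟩
  obtain ⟨γ, hγ⟩ := exists_prime_orderOf_dvd_card (G := Fˣ) 7 (by rwa [Fintype.card_units])
  have hγ7 : (γ : F) ^ 7 = 1 := by rw [← hγ, ← orderOf_units, pow_orderOf_eq_one]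
  have hγ1 : (γ : F) - 1 ≠ 0 := by
    rw [sub_ne_zero, ← Units.val_one, Ne, Units.val_inj, ← orderOf_eq_one_iff, hγ]
    norm_num
  -- In characteristic 2 the seventh cyclotomic polynomial is `(X³ + X + 1)(X³ + X² + 1)`.
  have hcyc : ((γ : F) ^ 3 + γ + 1) * ((γ : F) ^ 3 + γ ^ 2 + 1) = 0 := by
    refine (mul_eq_zero.mp ?_).resolve_left hγ1
    linear_combination hγ7 + ((γ : F) - 1) * (γ : F) ^ 3 * CharTwo.two_eq_zero (R := F)
  rcases mul_eq_zero.mp hcyc with h | h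
  · exact ⟨γ, h⟩
  · refine ⟨γ ^ 6, ?_⟩
    linear_combination (γ : F) ^ 4 * h + ((γ : F) ^ 11 + (γ : F) ^ 4 - 1) * hγ7

end FiniteField

namespace CharTwo

variable {R : Type*} [CommRing R] [CharP R 2] {x : R}

lemma pow_seven_eq_one_of_cube_add_self_add_one (hx : x ^ 3 + x + 1 = 0) : x ^ 7 = 1 := by
  linear_combination (x ^ 4 + x ^ 2 + x + 1) * hx -
    (x ^ 5 + x ^ 4 + x ^ 3 + x ^ 2 + x + 1) * two_eq_zero (R := R)

lemma pow_two_pow_cube_add_self_add_one (hx : x ^ 3 + x + 1 = 0) (i : ℕ) :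
    (x ^ 2 ^ i) ^ 3 + x ^ 2 ^ i + 1 = 0 := by
  induction i with
  | zero => simpa using hx
  | succ i ih =>
    rw [pow_succ 2 i, pow_mul]
    linear_combination ((x ^ 2 ^ i) ^ 3 + x ^ 2 ^ i + 1) * ih
      - ((x ^ 2 ^ i) ^ 4 + (x ^ 2 ^ i) ^ 3 + x ^ 2 ^ i) * two_eq_zero (R := R)

lemma pow_ne_self_of_cube_add_self_add_one {F : Type*} [Field F] [CharP F 2] {x : F}
    (hx : x ^ 3 + x + 1 = 0) {q : ℕ} (hq : 0 < q) (hq7 : ¬ 7 ∣ q - 1) : x ^ q ≠ x := by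
  intro hxq
  have hx0 : x ≠ 0 := by rintro rfl; norm_num at hx
  have hxq1 : x ^ (q - 1) = 1 :=
    mul_right_cancel₀ hx0 (by rw [← pow_succ, one_mul, Nat.sub_add_cancel hq, hxq])
  have hcop : Nat.Coprime 7 (q - 1) := (Nat.Prime.coprime_iff_not_dvd (by norm_num)).mpr hq7
  have h1 := Nat.eq_one_of_dvd_coprimes hcop
    (orderOf_dvd_of_pow_eq_one (pow_seven_eq_one_of_cube_add_self_add_one hx))
    (orderOf_dvd_of_pow_eq_one hxq1)
  rw [orderOf_eq_one_iff] at h1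
  rw [h1] at hx
  exact one_ne_zero (by linear_combination hx - two_eq_zero (R := F))

end CharTwo

lemma IsDifferenceSet.preimage_mul_add {m : ℕ} {D : Set (ZMod m)} (hD : IsDifferenceSet D)
    (u : (ZMod m)ˣ) (c : ZMod m) : IsDifferenceSet {x | (u : ZMod m) * x + c ∈ D} := by
  have hinv : ∀ y, (u : ZMod m) * (↑u⁻¹ * (y - c)) + c = y := fun y => by
    rw [Units.mul_inv_cancel_left, sub_add_cancel]
  intro a ha
  obtain ⟨⟨d₁, d₂⟩, ⟨h₁, h₂, hd⟩, huniq⟩ := hD (u * a) (by simpa using ha)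
  refine ⟨(↑u⁻¹ * (d₁ - c), ↑u⁻¹ * (d₂ - c)), ⟨?_, ?_, ?_⟩, ?_⟩
  · simpa [Set.mem_ofPred_eq, hinv] using h₁
  · simpa [Set.mem_ofPred_eq, hinv] using h₂
  · simp only at hd ⊢
    rw [← mul_sub, sub_sub_sub_cancel_right, hd, Units.inv_mul_cancel_left]
  rintro ⟨x, y⟩ ⟨hx, hy, hxy⟩
  have := huniq (u * x + c, u * y + c) ⟨hx, hy, by simp only at hxy ⊢; rw [← hxy]; ring⟩
  simp only [Prod.mk.injEq] at this ⊢
  rw [← this.1, ← this.2, add_sub_cancel_right, add_sub_cancel_right,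
    Units.inv_mul_cancel_left, Units.inv_mul_cancel_left]
  exact ⟨rfl, rfl⟩

namespace ZMod

variable {n : ℕ}

lemma seven_mul_natCast_div_seven (hn : 7 ∣ n) : 7 * ((n / 7 : ℕ) : ZMod n) = 0 := by
  rw [← Nat.cast_ofNat, ← Nat.cast_mul, Nat.mul_div_cancel' hn, ZMod.natCast_self]

lemma exists_lt_seven_eq_mul_of_seven_mul_eq_zero [NeZero n] (hn : 7 ∣ n) {t : ZMod n}
    (h7t : 7 * t = 0) : ∃ u : ℕ, u < 7 ∧ t = u * ((n / 7 : ℕ) : ZMod n) := by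
  have hdvd : n ∣ 7 * t.val := by
    rw [← ZMod.natCast_eq_zero_iff]; push_cast; rwa [ZMod.natCast_zmod_val]
  obtain ⟨u, hu⟩ : n / 7 ∣ t.val := by
    rwa [← Nat.mul_dvd_mul_iff_left (by norm_num : 0 < 7), Nat.mul_div_cancel' hn]
  refine ⟨u, ?_, ?_⟩
  · by_contra! h
    have := ZMod.val_lt t
    have := Nat.mul_le_mul_left (n / 7) h
    omega
  · rw [← ZMod.natCast_zmod_val t, hu]; push_cast; ring

lemma exists_sign_mul_mem_of_seven_mul_eq_zero [NeZero n] (hn : 7 ∣ n) {D : Set (ZMod n)}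
    {t : ZMod n} (ht0 : t ≠ 0) (h7t : 7 * t = 0) (ht : ∀ i, 2 ^ i * t ∈ D) :
    ∃ ε : (ZMod n)ˣ, ∀ i, 2 ^ i * (ε * ((n / 7 : ℕ) : ZMod n)) ∈ D := by
  suffices ∃ (ε : (ZMod n)ˣ) (j : ℕ), ε * ((n / 7 : ℕ) : ZMod n) = 2 ^ j * t by
    obtain ⟨ε, j, hεj⟩ := this
    exact ⟨ε, fun i => by rw [hεj, ← mul_assoc, ← pow_add]; exact ht _⟩
  obtain ⟨u, hu7, rfl⟩ := exists_lt_seven_eq_mul_of_seven_mul_eq_zero hn h7t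
  have h7 := seven_mul_natCast_div_seven hn
  set h : ZMod n := ((n / 7 : ℕ) : ZMod n)
  -- `{1, 2, 4}` and `{3, 5, 6} = -{1, 2, 4}` are the orbits of doubling on `(ℤ/7ℤ)ˣ`.
  interval_cases u
  · simp at ht0
  · exact ⟨1, 0, by simp⟩
  · exact ⟨1, 2, by simp only [Units.val_one]; linear_combination -h7⟩
  · exact ⟨-1, 1, by simp only [Units.val_neg, Units.val_one]; linear_combination -h7⟩
  · exact ⟨1, 1, by simp only [Units.val_one]; linear_combination -h7⟩
  · exact ⟨-1, 2, by simp only [Units.val_neg, Units.val_one]; linear_combination -3 * h7⟩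
  · exact ⟨-1, 0, by simp only [Units.val_neg, Units.val_one]; linear_combination -h7⟩

end ZMod

lemma IsDifferenceSet.exists_zero_mem_natCast_div_seven_mem {n : ℕ} [NeZero n] (hn : 7 ∣ n)
    {D : Set (ZMod n)} (hD : IsDifferenceSet D) {t : ZMod n} (ht0 : t ≠ 0) (h7t : 7 * t = 0)
    (ht : ∀ i, 2 ^ i * t ∈ D) :
    ∃ E : Set (ZMod n), IsDifferenceSet E ∧
      (0 : ZMod n) ∈ E ∧ ((n / 7 : ℕ) : ZMod n) ∈ E ∧
      ((3 * n / 7 : ℕ) : ZMod n) ∈ E := by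
  obtain ⟨ε, hε⟩ := ZMod.exists_sign_mul_mem_of_seven_mul_eq_zero hn ht0 h7t ht
  set h : ZMod n := ((n / 7 : ℕ) : ZMod n)
  have h3 : ((3 * n / 7 : ℕ) : ZMod n) = 3 * h := by
    rw [Nat.mul_div_assoc 3 hn, Nat.cast_mul, Nat.cast_ofNat]
  refine ⟨{x | (ε : ZMod n) * x + ε * h ∈ D}, hD.preimage_mul_add ε _, ?_, ?_, ?_⟩
  · show (ε : ZMod n) * 0 + ε * h ∈ D
    simpa using hε 0
  · show (ε : ZMod n) * h + ε * h ∈ D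
    simpa [two_mul] using hε 1
  · show (ε : ZMod n) * _ + ε * h ∈ D
    convert hε 2 using 1
    rw [h3]; ring

namespace Singer

def trace {R : Type*} [CommRing R] (q : ℕ) (x : R) : R := x + x ^ q + x ^ q ^ 2

section Trace

variable {R : Type*} [CommRing R] {p e q : ℕ}

lemma trace_add [ExpChar R p] (hq : q = p ^ e) (x y : R) :
    trace q (x + y) = trace q x + trace q y := by
  subst hq
  simp only [trace, ← pow_mul, add_pow_expChar_pow]
  ring

lemma trace_mul_of_pow_eq_self {c : R} (hc : c ^ q = c) (x : R) :
    trace q (c * x) = c * trace q x := by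
  have hc2 : c ^ q ^ 2 = c := by rw [sq, pow_mul, hc, hc]
  simp only [trace, mul_pow, hc, hc2]
  ring

lemma trace_pow_eq_self {F : Type*} [Field F] [Fintype F] [ExpChar F p] (hq : q = p ^ e)
    (hcard : Fintype.card F = q ^ 3) (x : F) : trace q x ^ q = trace q x := by
  have hfrob : ∀ a b : F, (a + b) ^ q = a ^ q + b ^ q := by
    intro a b; rw [hq]; exact add_pow_expChar_pow a b p e
  have h3 : (x ^ q ^ 2) ^ q = x := by
    rw [← pow_mul, ← pow_succ, ← hcard, FiniteField.pow_card]
  simp only [trace, hfrob, h3, ← pow_mul, ← sq]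
  ring

lemma trace_eq_zero_of_cube_add_self_add_one [CharP R 2] (hq : q = 2 ^ e) (he3 : e % 3 ≠ 0)
    {x : R} (hx : x ^ 3 + x + 1 = 0) : trace q x = 0 := by
  have h8 : x ^ 8 = x := by
    rw [pow_succ, CharTwo.pow_seven_eq_one_of_cube_add_self_add_one hx, one_mul]
  have hq2 : q ^ 2 = 2 ^ (2 * e) := by rw [hq, ← pow_mul, mul_comm]
  rw [trace, hq2, hq, pow_two_pow_eq_pow_two_pow_mod_three h8,
    pow_two_pow_eq_pow_two_pow_mod_three h8 (2 * e)]
  rcases (by omega : e % 3 = 1 ∨ e % 3 = 2) with h | h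
  · rw [h, show 2 * e % 3 = 2 by omega]
    linear_combination x * hx
  · rw [h, show 2 * e % 3 = 1 by omega]
    linear_combination x * hx

def tracePair [ExpChar R p] (hq : q = p ^ e) (α : R) : R →+ R × R :=
  let tr : R →+ R := AddMonoidHom.mk' (trace q) (trace_add hq)
  tr.prod (tr.comp (AddMonoidHom.mulLeft α))

lemma mem_ker_tracePair [ExpChar R p] (hq : q = p ^ e) {α x : R} :
    x ∈ (tracePair hq α).ker ↔ trace q x = 0 ∧ trace q (α * x) = 0 := by
  simp [tracePair]

lemma mul_mem_ker_tracePair [ExpChar R p] (hq : q = p ^ e) {α c x : R} (hc : c ^ q = c)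
    (hx : x ∈ (tracePair hq α).ker) : c * x ∈ (tracePair hq α).ker := by
  rw [mem_ker_tracePair] at hx ⊢
  rw [mul_left_comm, trace_mul_of_pow_eq_self hc, trace_mul_of_pow_eq_self hc, hx.1, hx.2,
    mul_zero, and_self]

end Trace

section Kernel

variable {F : Type*} [Field F] [Fintype F] {p e q : ℕ} [ExpChar F p]

lemma card_ker_tracePair_le (hq : q = p ^ e) (hcard : Fintype.card F = q ^ 3) {α : F}
    (hα : α ^ q ≠ α) : Nat.card (tracePair hq α).ker ≤ q := by
  have hq1 := FiniteField.one_lt_of_card_eq_pow_three hcard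
  have hb : α ^ q ^ 2 - α ^ q ≠ 0 := by
    intro h
    apply hα
    rw [← sub_eq_zero, ← pow_eq_zero_iff (n := q) hq1.ne_bot]
    rwa [hq, sub_pow_expChar_pow, ← pow_mul, ← sq, ← hq]
  rw [← SetLike.coe_sort_coe, Nat.card_coe_set_eq]
  refine le_trans (Set.ncard_le_ncard (fun x hx => ?_) (Set.toFinite _))
    (ncard_setOf_mul_add_mul_pow_eq_zero_le hq1 (α ^ q ^ 2 - α) hb)
  obtain ⟨h1, h2⟩ := (mem_ker_tracePair hq).mp hx
  simp only [trace, mul_pow] at h1 h2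
  rw [Set.mem_ofPred_eq]
  linear_combination α ^ q ^ 2 * h1 - h2

lemma le_card_ker_tracePair (hq : q = p ^ e) (hcard : Fintype.card F = q ^ 3) (α : F) :
    q ≤ Nat.card (tracePair hq α).ker := by
  set K := {c : F | c ^ q = c}
  have hrange : Nat.card (tracePair hq α).range ≤ q ^ 2 := by
    calc Nat.card (tracePair hq α).range ≤ (K ×ˢ K).ncard := by
          rw [← SetLike.coe_sort_coe, Nat.card_coe_set_eq]
          refine Set.ncard_le_ncard ?_ (Set.toFinite _)
          rintro _ ⟨x, rfl⟩
          exact ⟨trace_pow_eq_self hq hcard x, trace_pow_eq_self hq hcard (α * x)⟩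
      _ = q ^ 2 := by
        rw [Set.ncard_prod, FiniteField.ncard_setOf_pow_eq_self_of_card_eq_pow_three hcard, sq]
  have hmul : Nat.card (tracePair hq α).ker * Nat.card (tracePair hq α).range = q ^ 3 := by
    rw [← AddSubgroup.index_ker, AddSubgroup.card_mul_index, Nat.card_eq_fintype_card, hcard]
  have hq1 := FiniteField.one_lt_of_card_eq_pow_three hcard
  refine Nat.le_of_mul_le_mul_right (c := q ^ 2) ?_ (pow_pos (zero_lt_one.trans hq1) 2)
  calc q * q ^ 2 = Nat.card (tracePair hq α).ker * Nat.card (tracePair hq α).range := by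
        rw [hmul]; ring
    _ ≤ Nat.card (tracePair hq α).ker * q ^ 2 := Nat.mul_le_mul_left _ hrange

lemma exists_ne_zero_mem_ker_tracePair (hq : q = p ^ e) (hcard : Fintype.card F = q ^ 3)
    (α : F) : ∃ v ∈ (tracePair hq α).ker, v ≠ 0 := by
  have : Nontrivial (tracePair hq α).ker := Finite.one_lt_card_iff_nontrivial.mp
    ((FiniteField.one_lt_of_card_eq_pow_three hcard).trans_le (le_card_ker_tracePair hq hcard α))
  obtain ⟨⟨v, hv⟩, hv0⟩ := exists_ne (0 : (tracePair hq α).ker)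
  exact ⟨v, hv, fun h => hv0 (Subtype.ext h)⟩

lemma exists_pow_eq_self_eq_mul (hq : q = p ^ e) (hcard : Fintype.card F = q ^ 3) {α v w : F}
    (hα : α ^ q ≠ α) (hv : v ∈ (tracePair hq α).ker) (hv0 : v ≠ 0)
    (hw : w ∈ (tracePair hq α).ker) : ∃ c : F, c ^ q = c ∧ w = c * v := by
  set K := {c : F | c ^ q = c}
  let f : K → (tracePair hq α).ker := fun c => ⟨c * v, mul_mem_ker_tracePair hq c.2 hv⟩
  have hf : Function.Injective f := fun c d h =>
    Subtype.ext (mul_right_cancel₀ hv0 (congrArg Subtype.val h))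
  have hcardK : Nat.card (tracePair hq α).ker ≤ Nat.card K := by
    rw [Nat.card_coe_set_eq, FiniteField.ncard_setOf_pow_eq_self_of_card_eq_pow_three hcard]
    exact card_ker_tracePair_le hq hcard hα
  obtain ⟨c, hc⟩ := (hf.bijective_of_nat_card_le hcardK).2 ⟨w, hw⟩
  exact ⟨c, c.2, (congrArg Subtype.val hc).symm⟩

end Kernel

def singerSet {F : Type*} [Field F] (q n : ℕ) (g : F) : Set (ZMod n) :=
  {d | trace q (g ^ d.val) = 0}

section Generator

variable {F : Type*} [Field F] [Fintype F] {q n : ℕ} {g : Fˣ}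

lemma exists_pow_eq_of_ne_zero (hg : ∀ x, x ∈ Subgroup.zpowers g) {x : F} (hx : x ≠ 0) :
    ∃ j : ℕ, (g : F) ^ j = x := by
  obtain ⟨j, hj⟩ := mem_powers_iff_mem_zpowers.mpr (hg (Units.mk0 x hx))
  exact ⟨j, by rw [← Units.val_pow_eq_pow_val, ← Units.val_mk0 hx, ← hj]⟩

lemma orderOf_eq_mul_sub_one (hcard : Fintype.card F = q ^ 3) (hn : n = q ^ 2 + q + 1)
    (hg : ∀ x, x ∈ Subgroup.zpowers g) : orderOf (g : F) = n * (q - 1) := by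
  classical
  rw [orderOf_units, orderOf_eq_card_of_forall_mem_zpowers hg, Nat.card_eq_fintype_card,
    Fintype.card_units, hcard, hn, Nat.pow_three_sub_one]

lemma pow_eq_pow_iff_modEq_mul (hcard : Fintype.card F = q ^ 3) (hn : n = q ^ 2 + q + 1)
    (hg : ∀ x, x ∈ Subgroup.zpowers g) {i j : ℕ} :
    (g : F) ^ i = (g : F) ^ j ↔ i ≡ j [MOD n * (q - 1)] := by
  have hq1 := FiniteField.one_lt_of_card_eq_pow_three hcard
  have hord := orderOf_eq_mul_sub_one hcard hn hg
  rw [← hord]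
  exact (orderOf_pos_iff.mp (by rw [hord, hn]; exact Nat.mul_pos (by positivity) (by omega)))
    |>.pow_eq_pow_iff_modEq

lemma pow_pow_eq_self_iff (hcard : Fintype.card F = q ^ 3) (hn : n = q ^ 2 + q + 1)
    (hg : ∀ x, x ∈ Subgroup.zpowers g) (j : ℕ) :
    ((g : F) ^ j) ^ q = (g : F) ^ j ↔ n ∣ j := by
  have hq1 := FiniteField.one_lt_of_card_eq_pow_three hcard
  rw [← pow_mul, pow_eq_pow_iff_modEq_mul hcard hn hg, Nat.ModEq.comm,
    Nat.modEq_iff_dvd' (Nat.le_mul_of_pos_right j (by omega)), ← Nat.mul_sub_one]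
  exact Nat.mul_dvd_mul_iff_right (by omega)

lemma natCast_mem_singerSet_iff (hcard : Fintype.card F = q ^ 3) (hn : n = q ^ 2 + q + 1)
    (hg : ∀ x, x ∈ Subgroup.zpowers g) (j : ℕ) :
    (j : ZMod n) ∈ singerSet q n (g : F) ↔ trace q ((g : F) ^ j) = 0 := by
  have hsplit : trace q ((g : F) ^ j) = (g : F) ^ (n * (j / n)) * trace q ((g : F) ^ (j % n)) := by
    conv_lhs => rw [← Nat.div_add_mod j n, pow_add]
    exact trace_mul_of_pow_eq_self ((pow_pow_eq_self_iff hcard hn hg _).mpr (dvd_mul_right n _)) _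
  rw [singerSet, Set.mem_ofPred_eq, ZMod.val_natCast, hsplit, mul_eq_zero,
    or_iff_right (pow_ne_zero _ g.ne_zero)]

lemma natCast_eq_of_pow_eq_mul (hcard : Fintype.card F = q ^ 3) (hn : n = q ^ 2 + q + 1)
    (hg : ∀ x, x ∈ Subgroup.zpowers g) {c : F} (hc : c ^ q = c) {i j : ℕ}
    (h : (g : F) ^ i = c * (g : F) ^ j) : (i : ZMod n) = j := by
  have hc0 : c ≠ 0 := by
    rintro rfl
    exact pow_ne_zero i g.ne_zero (by rw [h, zero_mul])
  obtain ⟨k, rfl⟩ := exists_pow_eq_of_ne_zero hg hc0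
  obtain ⟨m, rfl⟩ := (pow_pow_eq_self_iff hcard hn hg k).mp hc
  rw [← pow_add, pow_eq_pow_iff_modEq_mul hcard hn hg] at h
  rw [ZMod.natCast_eq_natCast_iff]
  exact (Nat.ModEq.of_mul_right _ h).trans (by simp [Nat.ModEq])

theorem isDifferenceSet_singerSet {p e : ℕ} [ExpChar F p] (hq : q = p ^ e)
    (hcard : Fintype.card F = q ^ 3) (hn : n = q ^ 2 + q + 1)
    (hg : ∀ x, x ∈ Subgroup.zpowers g) : IsDifferenceSet (singerSet q n (g : F)) := by
  have : NeZero n := ⟨by omega⟩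
  have hmem := natCast_mem_singerSet_iff hcard hn hg
  have hshift : ∀ (i : ℕ) (a : ZMod n), ((i + a.val : ℕ) : ZMod n) = (i : ZMod n) + a := by
    intro i a; push_cast; rw [ZMod.natCast_zmod_val]
  intro a ha
  have hα : ((g : F) ^ a.val) ^ q ≠ (g : F) ^ a.val := by
    rw [Ne, pow_pow_eq_self_iff hcard hn hg, ← ZMod.natCast_eq_zero_iff, ZMod.natCast_zmod_val]
    exact ha
  set α := (g : F) ^ a.val
  have hpow_add : ∀ i : ℕ, (g : F) ^ (i + a.val) = α * (g : F) ^ i := fun i => by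
    rw [pow_add, mul_comm]
  obtain ⟨v, hv, hv0⟩ := exists_ne_zero_mem_ker_tracePair hq hcard α
  obtain ⟨j, rfl⟩ := exists_pow_eq_of_ne_zero hg hv0
  obtain ⟨hj, hαj⟩ := (mem_ker_tracePair hq).mp hv
  refine ⟨((j : ZMod n) + a, (j : ZMod n)),
    ⟨?_, (hmem j).mpr hj, add_sub_cancel_left _ _⟩, ?_⟩
  · rw [← hshift, hmem, hpow_add]; exact hαj
  rintro ⟨x, y⟩ ⟨hx, hy, hxy⟩
  obtain rfl : x = y + a := eq_add_of_sub_eq' hxy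
  rw [← ZMod.natCast_zmod_val y, ← hshift, hmem, hpow_add] at hx
  rw [← ZMod.natCast_zmod_val y, hmem] at hy
  obtain ⟨c, hc, hyc⟩ :=
    exists_pow_eq_self_eq_mul hq hcard hα hv hv0 ((mem_ker_tracePair hq).mpr ⟨hy, hx⟩)
  obtain rfl : y = j := by
    rw [← ZMod.natCast_zmod_val y]; exact natCast_eq_of_pow_eq_mul hcard hn hg hc hyc
  rfl

end Generator

section SevenTorsion

variable {F : Type*} [Field F] [Fintype F] [CharP F 2] {e q n : ℕ} {g : Fˣ}

theorem exists_seven_torsion_two_pow_mul_mem_singerSet (hq : q = 2 ^ e) (he3 : e % 3 ≠ 0)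
    (hcard : Fintype.card F = q ^ 3) (hn : n = q ^ 2 + q + 1)
    (hg : ∀ x, x ∈ Subgroup.zpowers g) :
    ∃ t : ZMod n, t ≠ 0 ∧ 7 * t = 0 ∧ ∀ i, 2 ^ i * t ∈ singerSet q n (g : F) := by
  have hq7 : q % 7 = 2 ∨ q % 7 = 4 := hq ▸ Nat.two_pow_mod_seven he3
  have h7n : 7 ∣ n := hn ▸ Nat.seven_dvd_sq_add_self_add_one hq7
  obtain ⟨δ, hδ⟩ := FiniteField.exists_cube_add_self_add_one_eq_zero (F := F) (by
    rw [hcard, Nat.pow_three_sub_one, ← hn]; exact h7n.mul_right _)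
  have hδ0 : δ ≠ 0 := by rintro rfl; norm_num at hδ
  obtain ⟨s, rfl⟩ := exists_pow_eq_of_ne_zero hg hδ0
  refine ⟨s, fun hs => ?_, ?_, fun i => ?_⟩
  · refine CharTwo.pow_ne_self_of_cube_add_self_add_one (q := q) hδ
      (zero_lt_one.trans (FiniteField.one_lt_of_card_eq_pow_three hcard)) (by omega) ?_
    exact (pow_pow_eq_self_iff hcard hn hg s).mpr ((ZMod.natCast_eq_zero_iff _ _).mp hs)
  · have h7s := natCast_eq_of_pow_eq_mul hcard hn hg (one_pow q) (i := s * 7) (j := 0) (by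
      rw [pow_mul, CharTwo.pow_seven_eq_one_of_cube_add_self_add_one hδ, pow_zero, one_mul])
    push_cast at h7s
    rw [mul_comm]; exact h7s
  · have : 2 ^ i * (s : ZMod n) = ((s * 2 ^ i : ℕ) : ZMod n) := by push_cast; ring
    rw [this, natCast_mem_singerSet_iff hcard hn hg, pow_mul]
    exact trace_eq_zero_of_cube_add_self_add_one hq he3
      (CharTwo.pow_two_pow_cube_add_self_add_one hδ i)

end SevenTorsion

end Singer

theorem exists_difference_set_containing_zero_nDiv7_threeNDiv7_general
    (e q n : ℕ) (he3 : e % 3 ≠ 0) (hq : q = 2 ^ e) (hn : n = q ^ 2 + q + 1) :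
    7 ∣ n ∧
    ∃ D : Set (ZMod n), IsDifferenceSet D ∧
      ((0 : ZMod n) ∈ D ∧ ((n / 7 : ℕ) : ZMod n) ∈ D ∧ ((3 * n / 7 : ℕ) : ZMod n) ∈ D) := by
  have h7n : 7 ∣ n := hn ▸ Nat.seven_dvd_sq_add_self_add_one (hq ▸ Nat.two_pow_mod_seven he3)
  refine ⟨h7n, ?_⟩
  have : NeZero n := ⟨by omega⟩
  have : Fact (Nat.Prime 2) := ⟨Nat.prime_two⟩
  let F := GaloisField 2 (3 * e)
  let : Fintype F := Fintype.ofFinite F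
  have hcard : Fintype.card F = q ^ 3 := by
    rw [← Nat.card_eq_fintype_card, GaloisField.card 2 (3 * e) (by omega), hq, ← pow_mul,
      mul_comm]
  obtain ⟨g, hg⟩ := IsCyclic.exists_generator (α := Fˣ)
  obtain ⟨t, ht0, h7t, ht⟩ :=
    Singer.exists_seven_torsion_two_pow_mul_mem_singerSet hq he3 hcard hn hg
  exact (Singer.isDifferenceSet_singerSet hq hcard hn hg).exists_zero_mem_natCast_div_seven_mem
    h7n ht0 h7t ht

/-- Let `q = 2^e` with `e ≥ 1` and `e ≢ 0 (mod 3)`, and `n = q² + q + 1`.  Then `7 ∣ n`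
and there is a difference set `D ⊆ ℤ/nℤ` containing `0`, `n/7` and `3n/7`. -/
theorem exists_difference_set_containing_zero_nDiv7_threeNDiv7
    (e q n : ℕ) (he : 1 ≤ e) (he3 : e % 3 ≠ 0) (hq : q = 2 ^ e) (hn : n = q ^ 2 + q + 1) :
    7 ∣ n ∧
    ∃ D : Set (ZMod n), IsDifferenceSet D ∧
      ((0 : ZMod n) ∈ D ∧ ((n / 7 : ℕ) : ZMod n) ∈ D ∧ ((3 * n / 7 : ℕ) : ZMod n) ∈ D) :=
  exists_difference_set_containing_zero_nDiv7_threeNDiv7_general e q n he3 hq hn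
end

section
/- Let P (points) and L (lines) be finite types equipped with a membership relation ∈ making them a projective plane (in the sense of Mathlib's Configuration.ProjectivePlane). Let A be a group acting on P and on L such that the actions are compatible with incidence: for all a ∈ A, p ∈ P and l ∈ L, one has p ∈ l if and only if a•p ∈ a•l. Assume that A acts freely and transitively on P, i.e. for all p, p' ∈ P there is a unique a ∈ A with a•p = p'. Then: (1) A acts freely and transitively on L (for all l, l' ∈ L there is a unique a ∈ A with a•l = l'); and (2) for any point p ∈ P and any line l ∈ L, the set D = {a ∈ A : a•p ∈ l} is a difference set in A, i.e. every element a ≠ 1 of A can be written in exactly one way as a = d₁·d₂⁻¹ with d₁, d₂ ∈ D. -/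
set_option maxRecDepth 8000


/-- A subset `D` of a group `A` is a difference set if every nontrivial element `a ∈ A`
can be written in exactly one way as `a = d₁ · d₂⁻¹` with `d₁, d₂ ∈ D`. -/
def IsGroupDifferenceSet {A : Type*} [Group A] (D : Set A) : Prop :=
  ∀ a : A, a ≠ 1 → ∃! p : A × A, p.1 ∈ D ∧ p.2 ∈ D ∧ p.1 * p.2⁻¹ = a

/-- If a group `A` acts on a finite projective plane compatibly with incidence and acts
freely and transitively on the points, then it acts freely and transitively on the lines,
and for any point `p` and line `l` the set `{a : A | a • p ∈ l}` is a difference set. -/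
theorem projectivePlane_point_regular_action
    (P L : Type) [Membership P L] [Configuration.ProjectivePlane P L]
    [Finite P] [Finite L]
    (A : Type) [Group A] [MulAction A P] [MulAction A L]
    (hcompat : ∀ (a : A) (p : P) (l : L), p ∈ l ↔ (a • p) ∈ (a • l))
    (hreg : ∀ p p' : P, ∃! a : A, a • p = p') :
    (∀ l l' : L, ∃! a : A, a • l = l') ∧
    (∀ (p : P) (l : L), IsGroupDifferenceSet {a : A | a • p ∈ l}) := by
  classical
  haveI := Fintype.ofFinite P
  haveI := Fintype.ofFinite L
  obtain ⟨p₀, -, -, -, -, -, -, -, -, -, -, -, -, -⟩ :=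
    @Configuration.ProjectivePlane.exists_config P L _ _
  -- freeness on points
  have hfree : ∀ (a : A) (q : P), a • q = q → a = 1 := by
    intro a q h
    obtain ⟨b, -, hb⟩ := hreg q q
    exact (hb a h).trans (hb 1 (one_smul A q)).symm
  have hinj : Function.Injective (fun a : A => a • p₀) := by
    intro a b hab
    have h1 : (b⁻¹ * a) • p₀ = p₀ := by
      rw [mul_smul]
      simp only at hab
      rw [hab, inv_smul_smul]
    have := hfree _ _ h1
    rwa [inv_mul_eq_one, eq_comm] at this
  haveI : Finite A := Finite.of_injective _ hinj
  haveI := Fintype.ofFinite A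
  have hsurj : Function.Surjective (fun a : A => a • p₀) := fun p => (hreg p₀ p).exists
  have hcardAP : Fintype.card A = Fintype.card P := Fintype.card_of_bijective ⟨hinj, hsurj⟩
  have hcardPL := Configuration.ProjectivePlane.card_points_eq_card_lines P L
  -- key : no nontrivial element fixes a line
  have keyline : ∀ a : A, a ≠ 1 → ∀ l : L, a • l ≠ l := by
    intro a ha l₀ hl₀
    have hfix : ∀ q : P, q ∈ l₀ → a • q ∈ l₀ := by
      intro q hq
      have := (hcompat a q l₀).mp hq
      rwa [hl₀] at this
    set f : L → ℕ := fun l => (Finset.univ.filter fun q : P => q ∈ l ∧ a • q ∈ l).card with hf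
    have hsum : ∑ l : L, f l = Fintype.card P := by
      have h1 : ∑ l : L, f l = ∑ l : L, ∑ q : P, if q ∈ l ∧ a • q ∈ l then 1 else 0 :=
        Finset.sum_congr rfl fun l _ => Finset.card_filter _ _
      rw [h1, Finset.sum_comm]
      have h3 : ∀ q : P, (∑ l : L, if q ∈ l ∧ a • q ∈ l then 1 else 0) = 1 := by
        intro q
        have hne : q ≠ a • q := fun h => ha (hfree a q h.symm)
        obtain ⟨l, hl, hluniq⟩ := Configuration.HasLines.existsUnique_line P L q (a • q) hne
        rw [← Finset.card_filter, Finset.card_eq_one]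
        exact ⟨l, by
          ext m
          simp only [Finset.mem_filter, Finset.mem_univ, true_and, Finset.mem_singleton]
          exact ⟨fun h => hluniq m h, fun h => h ▸ hl⟩⟩
      rw [Finset.sum_congr rfl fun q _ => h3 q, Finset.sum_const, smul_eq_mul, mul_one,
        Finset.card_univ]
    have hpos : ∀ l : L, 1 ≤ f l := by
      intro l
      rw [Nat.one_le_iff_ne_zero, ← Nat.pos_iff_ne_zero, hf, Finset.card_pos]
      by_cases h : a⁻¹ • l = l
      · -- a fixes l, any point of l works
        have h2 : 2 < Configuration.pointCount P l := Configuration.ProjectivePlane.two_lt_pointCount P l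
        have : Nonempty {p : P // p ∈ l} := by
          rw [Configuration.pointCount] at h2
          exact Nat.card_pos_iff.mp (by omega) |>.1
        obtain ⟨q, hq⟩ := this
        refine ⟨q, Finset.mem_filter.mpr ⟨Finset.mem_univ q, hq, ?_⟩⟩
        have := (hcompat a q l).mp hq
        have hal : a • l = l := by
          conv_lhs => rw [← h, smul_inv_smul]
        rwa [hal] at this
      · obtain ⟨hq1, hq2⟩ := Configuration.HasPoints.mkPoint_ax (P := P) (L := L) (Ne.symm h)
        refine ⟨_, Finset.mem_filter.mpr ⟨Finset.mem_univ _, hq1, ?_⟩⟩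
        have := (hcompat a _ (a⁻¹ • l)).mp hq2
        rwa [smul_inv_smul] at this
    have hall : ∀ l : L, f l = 1 := by
      have hle : ∑ _l : L, (1 : ℕ) = ∑ l : L, f l := by
        rw [hsum, Finset.sum_const, Finset.card_univ, smul_eq_mul, mul_one, hcardPL]
      have h5 := (Finset.sum_eq_sum_iff_of_le (s := Finset.univ) (f := fun _ : L => (1 : ℕ))
        (g := f) (fun l _ => hpos l)).mp hle
      intro l
      exact (h5 l (Finset.mem_univ l)).symm
    -- but f l₀ ≥ 2
    have h2 : 2 < Configuration.pointCount P l₀ := Configuration.ProjectivePlane.two_lt_pointCount P l₀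
    rw [Configuration.pointCount, Nat.card_eq_fintype_card] at h2
    obtain ⟨⟨q1, hq1⟩, ⟨q2, hq2⟩, hne⟩ := Fintype.exists_pair_of_one_lt_card (α := {p : P // p ∈ l₀}) (by omega)
    have : 1 < f l₀ := by
      rw [hf]
      refine Finset.one_lt_card.mpr ⟨q1, ?_, q2, ?_, ?_⟩
      · exact Finset.mem_filter.mpr ⟨Finset.mem_univ _, hq1, hfix _ hq1⟩
      · exact Finset.mem_filter.mpr ⟨Finset.mem_univ _, hq2, hfix _ hq2⟩
      · exact fun h => hne (Subtype.ext h)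
    have h4 := hall l₀
    omega
  -- Part 1: regular action on lines
  have part1 : ∀ l l' : L, ∃! a : A, a • l = l' := by
    intro l l'
    have hinjL : Function.Injective (fun a : A => a • l) := by
      intro x y hxy
      simp only at hxy
      have hfixl : (y⁻¹ * x) • l = l := by rw [mul_smul, hxy, inv_smul_smul]
      rcases eq_or_ne (y⁻¹ * x) 1 with h1 | h1
      · rw [inv_mul_eq_one] at h1
        exact h1.symm
      · exact absurd hfixl (keyline _ h1 l)
    have hsurjL : Function.Surjective (fun a : A => a • l) :=
      ((Fintype.bijective_iff_injective_and_card _).mpr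
        ⟨hinjL, hcardAP.trans hcardPL⟩).2
    obtain ⟨b, hb⟩ := hsurjL l'
    exact ⟨b, hb, fun c hc => hinjL (hc.trans hb.symm)⟩
  refine ⟨part1, ?_⟩
  -- Part 2: difference set
  intro p l a ha
  have hli : l ≠ a⁻¹ • l := fun h => keyline a⁻¹ (inv_ne_one.mpr ha) l h.symm
  obtain ⟨q, ⟨hq1, hq2⟩, hquniq⟩ :=
    Configuration.HasPoints.existsUnique_point P L l (a⁻¹ • l) hli
  obtain ⟨d, hd, hduniq⟩ := hreg p q
  refine ⟨(a * d, d), ⟨?_, ?_, ?_⟩, ?_⟩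
  · show (a * d) • p ∈ l
    have h6 : a • q ∈ a • (a⁻¹ • l) := (hcompat a q (a⁻¹ • l)).mp hq2
    rw [smul_inv_smul] at h6
    rw [mul_smul, hd]
    exact h6
  · show d • p ∈ l
    rw [hd]
    exact hq1
  · show (a * d) * d⁻¹ = a
    group
  · rintro ⟨x, y⟩ ⟨hx, hy, hxy⟩
    simp only [Set.mem_setOf_eq] at hx hy hxy
    have hxay : x = a * y := by rw [← hxy]; group
    have hyq : y • p = q := by
      apply hquniq
      refine ⟨hy, ?_⟩
      have h8 : a • (y • p) ∈ l := by rw [← mul_smul, ← hxay]; exact hx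
      have h7 := hcompat a (y • p) (a⁻¹ • l)
      rw [smul_inv_smul] at h7
      exact h7.mpr h8
    have hy' : y = d := hduniq y hyq
    refine Prod.ext ?_ ?_
    · show x = a * d
      rw [hxay, hy']
    · exact hy'
end

section
/- Let F be a finite field and let E be a field that is an F-algebra with dim_F E = 3 (so E is a finite field). Consider the projectivization ℙ(E) of E viewed as an F-vector space (points are nonzero vectors modulo nonzero F-scalars). Then: (i) for all nonzero v, w ∈ E there exists a nonzero u ∈ E such that the class of u·v in ℙ(E) equals the class of w; and (ii) for all nonzero u, v ∈ E, the class of u·v in ℙ(E) equals the class of v if and only if u lies in the image of F in E, i.e. u = algebraMap F E c for some (necessarily nonzero) c ∈ F. Consequently the quotient group Eˣ/Fˣ acts freely and transitively on the points of the projective plane ℙ(E). -/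
/-- Singer's theorem setup: for a finite field `F` and a field `E` that is an `F`-algebra
of dimension `3`, multiplication by nonzero elements of `E` acts transitively on the points
of the projective plane `ℙ(E)` over `F`, and the stabilizer of a point is exactly the image
of `F` in `E`; hence `Eˣ/Fˣ` acts freely and transitively on the points of `ℙ(E)`. -/
theorem singer_group_free_transitive
    (F E : Type) [Field F] [Fintype F] [Field E] [Algebra F E]
    (hdim : Module.finrank F E = 3) :
    (∀ (v w : E) (hv : v ≠ 0) (hw : w ≠ 0), ∃ (u : E) (hu : u ≠ 0),
        Projectivization.mk F (u * v) (mul_ne_zero hu hv) = Projectivization.mk F w hw) ∧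
    (∀ (u v : E) (hu : u ≠ 0) (hv : v ≠ 0),
        Projectivization.mk F (u * v) (mul_ne_zero hu hv) = Projectivization.mk F v hv ↔
          ∃ c : F, u = algebraMap F E c) ∧
    (∀ (v w : E) (hv : v ≠ 0) (hw : w ≠ 0) (u u' : E) (hu : u ≠ 0) (hu' : u' ≠ 0),
        Projectivization.mk F (u * v) (mul_ne_zero hu hv) = Projectivization.mk F w hw →
        Projectivization.mk F (u' * v) (mul_ne_zero hu' hv) = Projectivization.mk F w hw →
        ∃ c : F, u = algebraMap F E c * u') := by
  refine ⟨?_, ?_, ?_⟩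
  · intro v w hv hw
    refine ⟨w * v⁻¹, mul_ne_zero hw (inv_ne_zero hv), ?_⟩
    congr 1
    field_simp
  · intro u v hu hv
    rw [Projectivization.mk_eq_mk_iff]
    constructor
    · rintro ⟨a, ha⟩
      refine ⟨(a : F), ?_⟩
      have : algebraMap F E (a : F) * v = u * v := by
        rw [← Algebra.smul_def]; exact ha
      exact (mul_right_cancel₀ hv this).symm
    · rintro ⟨c, rfl⟩
      have hc : c ≠ 0 := by
        rintro rfl; simp at hu
      exact ⟨Units.mk0 c hc, by rw [Units.smul_mk0, Algebra.smul_def]⟩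
  · intro v w hv hw u u' hu hu' h1 h2
    rw [← h2, Projectivization.mk_eq_mk_iff] at h1
    obtain ⟨a, ha⟩ := h1
    refine ⟨(a : F), ?_⟩
    have : algebraMap F E (a : F) * u' * v = u * v := by
      rw [mul_assoc, ← Algebra.smul_def]; exact ha
    exact (mul_right_cancel₀ hv this).symm
end

section
/- Let A be a finite abelian group (written additively) and let D ⊆ A be a difference set with |D| ≥ 3. Consider the incidence structure whose points are the elements of A and whose lines are indexed by the elements of A, a point x lying on the line indexed by b if and only if x − b ∈ D (so the lines are the translates b + D). Then: (1) for any two distinct points x, y ∈ A there is a unique b ∈ A such that both x and y lie on the line indexed by b; (2) for any two distinct indices b, b' ∈ A, the lines b + D and b' + D are distinct and meet in exactly one point; and (3) there exist four points in A no three of which lie on a common line. In particular this incidence structure is a projective plane. -/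
/-!
Both incidence axioms come from a single fact: for `a ≠ 0` there is exactly one `d ∈ D` with
`d - a ∈ D`. Two points `x ≠ y` lie on line `b` iff `x - b` is such a `d` for `a = x - y`, and
line `b` and line `b'` share `x` iff `x - b` is such a `d` for `a = b' - b`. Since every line has
at least three points, two distinct lines through a point `q`, each with two further points,
give four points no three of which are collinear, and such a quadrangle is all that is missing
for a projective plane.
-/

/-- A subset `D` of an additive group `A` is a difference set if every nonzero element
`a ∈ A` can be written in exactly one way as `a = d₁ − d₂` with `d₁, d₂ ∈ D`. -/
def IsAddDifferenceSet {A : Type*} [AddGroup A] (D : Set A) : Prop :=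
  ∀ a : A, a ≠ 0 → ∃! p : A × A, p.1 ∈ D ∧ p.2 ∈ D ∧ p.1 - p.2 = a

theorem Set.exists_mem_ne_ne_of_two_lt_ncard {α : Type*} {s : Set α} (hs : 2 < s.ncard)
    (u v : α) : ∃ d ∈ s, d ≠ u ∧ d ≠ v := by
  by_contra! h
  have hsub : s ⊆ {u, v} := fun d hd => by
    by_cases hdu : d = u
    · exact .inl hdu
    · exact .inr (h d hd hdu)
  have := (ncard_le_ncard hsub).trans (ncard_insert_le u {v})
  rw [ncard_singleton] at this
  omega

namespace Configuration

variable {P L : Type*} [Membership P L]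

variable (L) in
def IsQuadrangle (p₁ p₂ p₃ p₄ : P) : Prop :=
  p₁ ≠ p₂ ∧ p₁ ≠ p₃ ∧ p₁ ≠ p₄ ∧ p₂ ≠ p₃ ∧ p₂ ≠ p₄ ∧ p₃ ≠ p₄ ∧
    ∀ l : L, ¬(p₁ ∈ l ∧ p₂ ∈ l ∧ p₃ ∈ l) ∧ ¬(p₁ ∈ l ∧ p₂ ∈ l ∧ p₄ ∈ l) ∧
      ¬(p₁ ∈ l ∧ p₃ ∈ l ∧ p₄ ∈ l) ∧ ¬(p₂ ∈ l ∧ p₃ ∈ l ∧ p₄ ∈ l)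

theorem setOf_mem_ne_of_ne (hpoint : ∀ l l' : L, l ≠ l' → ∃! p : P, p ∈ l ∧ p ∈ l')
    (hthird : ∀ (l : L) (x y : P), ∃ p ∈ l, p ≠ x ∧ p ≠ y) {l l' : L} (hl : l ≠ l') :
    {p : P | p ∈ l} ≠ {p | p ∈ l'} := by
  intro hset
  obtain ⟨q, hq, hq_unique⟩ := hpoint l l' hl
  obtain ⟨p, hp, hpq, -⟩ := hthird l q q
  have hp' : p ∈ l' := (Set.ext_iff.mp hset p).mp hp
  exact hpq (hq_unique p ⟨hp, hp'⟩)

theorem not_collinear_of_mem_of_mem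
    (hline : ∀ p q : P, p ≠ q → ∃! l : L, p ∈ l ∧ q ∈ l) {l l' m : L} {q p₁ p₂ p₃ : P}
    (hq : ∀ p, p ∈ l → p ∈ l' → p = q) (h₁₂ : p₁ ≠ p₂) (h₁ : p₁ ∈ l) (h₂ : p₂ ∈ l)
    (h₃ : p₃ ∈ l') (h₃q : p₃ ≠ q) : ¬(p₁ ∈ m ∧ p₂ ∈ m ∧ p₃ ∈ m) := by
  rintro ⟨hm₁, hm₂, hm₃⟩
  have hml : m = l := (hline p₁ p₂ h₁₂).unique ⟨hm₁, hm₂⟩ ⟨h₁, h₂⟩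
  exact h₃q (hq p₃ (hml ▸ hm₃) h₃)

theorem exists_isQuadrangle_of_ne (hline : ∀ p q : P, p ≠ q → ∃! l : L, p ∈ l ∧ q ∈ l)
    (hpoint : ∀ l l' : L, l ≠ l' → ∃! p : P, p ∈ l ∧ p ∈ l')
    (hthird : ∀ (l : L) (x y : P), ∃ p ∈ l, p ≠ x ∧ p ≠ y) {l l' : L} (hl : l ≠ l') :
    ∃ p₁ p₂ p₃ p₄ : P, IsQuadrangle L p₁ p₂ p₃ p₄ := by
  obtain ⟨q, -, hq⟩ := hpoint l l' hl
  have hq : ∀ p, p ∈ l → p ∈ l' → p = q := fun p h h' => hq p ⟨h, h'⟩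
  have hq' : ∀ p, p ∈ l' → p ∈ l → p = q := fun p h' h => hq p h h'
  obtain ⟨p₁, h₁, h₁q, -⟩ := hthird l q q
  obtain ⟨p₂, h₂, h₂q, h₂₁⟩ := hthird l q p₁
  obtain ⟨p₃, h₃, h₃q, -⟩ := hthird l' q q
  obtain ⟨p₄, h₄, h₄q, h₄₃⟩ := hthird l' q p₃
  have hne : ∀ {p}, p ∈ l → p ≠ q → ∀ {r}, r ∈ l' → r ≠ q → p ≠ r :=
    fun hp hpq _ hr hrq hpr => hrq (hq _ (hpr ▸ hp) hr)
  refine ⟨p₁, p₂, p₃, p₄, h₂₁.symm, hne h₁ h₁q h₃ h₃q, hne h₁ h₁q h₄ h₄q,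
    hne h₂ h₂q h₃ h₃q, hne h₂ h₂q h₄ h₄q, h₄₃.symm, fun m => ⟨?_, ?_, ?_, ?_⟩⟩
  · exact not_collinear_of_mem_of_mem hline hq h₂₁.symm h₁ h₂ h₃ h₃q
  · exact not_collinear_of_mem_of_mem hline hq h₂₁.symm h₁ h₂ h₄ h₄q
  · rintro ⟨hm₁, hm₃, hm₄⟩
    exact not_collinear_of_mem_of_mem hline hq' h₄₃.symm h₃ h₄ h₁ h₁q ⟨hm₃, hm₄, hm₁⟩
  · rintro ⟨hm₂, hm₃, hm₄⟩
    exact not_collinear_of_mem_of_mem hline hq' h₄₃.symm h₃ h₄ h₂ h₂q ⟨hm₃, hm₄, hm₂⟩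

theorem nonempty_projectivePlane_of_isQuadrangle
    (hline : ∀ p q : P, p ≠ q → ∃! l : L, p ∈ l ∧ q ∈ l)
    (hpoint : ∀ l l' : L, l ≠ l' → ∃! p : P, p ∈ l ∧ p ∈ l')
    (hquad : ∃ p₁ p₂ p₃ p₄ : P, IsQuadrangle L p₁ p₂ p₃ p₄) :
    Nonempty (ProjectivePlane P L) := ⟨{
  exists_point l := by
    obtain ⟨p₁, p₂, p₃, _, -, -, -, -, -, -, hcol⟩ := hquad
    by_contra! h
    exact (hcol l).1 ⟨h p₁, h p₂, h p₃⟩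
  exists_line p := by
    obtain ⟨p₁, p₂, p₃, p₄, h₁₂, h₁₃, -, -, -, h₃₄, hcol⟩ := hquad
    by_contra! h
    obtain ⟨m₁₂, hm₁₂, -⟩ := hline p₁ p₂ h₁₂
    obtain ⟨m₁₃, hm₁₃, -⟩ := hline p₁ p₃ h₁₃
    obtain ⟨m₃₄, hm₃₄, -⟩ := hline p₃ p₄ h₃₄
    have hp : p = p₁ := by
      by_contra hp
      have hm : m₁₂ = m₁₃ := (hline p p₁ hp).unique ⟨h m₁₂, hm₁₂.1⟩ ⟨h m₁₃, hm₁₃.1⟩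
      exact (hcol m₁₂).1 ⟨hm₁₂.1, hm₁₂.2, hm ▸ hm₁₃.2⟩
    exact (hcol m₃₄).2.2.1 ⟨hp ▸ h m₃₄, hm₃₄.1, hm₃₄.2⟩
  eq_or_eq {p q _ _} hp hq hp' hq' :=
    or_iff_not_imp_left.mpr fun hpq => (hline p q hpq).unique ⟨hp, hq⟩ ⟨hp', hq'⟩
  mkPoint h := (hpoint _ _ h).exists.choose
  mkPoint_ax h := (hpoint _ _ h).exists.choose_spec
  mkLine h := (hline _ _ h).exists.choose
  mkLine_ax h := (hline _ _ h).exists.choose_spec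
  exists_config := by
    obtain ⟨q₁, q₂, q₃, q₄, h₁₂, h₁₃, -, -, -, h₃₄, hcol⟩ := hquad
    obtain ⟨m₁₂, ⟨hm₁, hm₂⟩, -⟩ := hline q₁ q₂ h₁₂
    obtain ⟨m₁₃, ⟨hn₁, hn₃⟩, -⟩ := hline q₁ q₃ h₁₃
    obtain ⟨m₃₄, ⟨hk₃, hk₄⟩, -⟩ := hline q₃ q₄ h₃₄
    exact ⟨q₄, q₁, q₂, m₃₄, m₁₂, m₁₃, fun h => (hcol m₁₂).2.1 ⟨hm₁, hm₂, h⟩,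
      fun h => (hcol m₁₃).2.2.1 ⟨hn₁, hn₃, h⟩, fun h => (hcol m₃₄).2.2.1 ⟨h, hk₃, hk₄⟩, hm₁, hn₁,
      fun h => (hcol m₃₄).2.2.2 ⟨h, hk₃, hk₄⟩, hm₂, fun h => (hcol m₁₃).1 ⟨hn₁, h, hn₃⟩⟩ }⟩

end Configuration

theorem exists_sub_mem_ne_ne {A : Type*} [AddGroup A] {D : Set A} (hD : 2 < D.ncard)
    (b x y : A) : ∃ p, p - b ∈ D ∧ p ≠ x ∧ p ≠ y := by
  obtain ⟨d, hd, hdx, hdy⟩ := Set.exists_mem_ne_ne_of_two_lt_ncard hD (x - b) (y - b)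
  exact ⟨d + b, by rwa [add_sub_cancel_right], fun h => hdx (eq_sub_iff_add_eq.mpr h),
    fun h => hdy (eq_sub_iff_add_eq.mpr h)⟩

namespace IsAddDifferenceSet

variable {A : Type*} [AddCommGroup A] {D : Set A}

theorem existsUnique_mem_sub_mem (hD : IsAddDifferenceSet D) {a : A} (ha : a ≠ 0) :
    ∃! d, d ∈ D ∧ d - a ∈ D := by
  obtain ⟨⟨d₁, d₂⟩, ⟨h₁, h₂, hsub⟩, hunique⟩ := hD a ha
  dsimp only at h₁ h₂ hsub
  refine ⟨d₁, ⟨h₁, ?_⟩, fun d ⟨hd, hda⟩ => ?_⟩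
  · rwa [← hsub, sub_sub_cancel]
  · exact congrArg Prod.fst (hunique (d, d - a) ⟨hd, hda, sub_sub_cancel d a⟩)

theorem existsUnique_line (hD : IsAddDifferenceSet D) {x y : A} (hxy : x ≠ y) :
    ∃! b, x - b ∈ D ∧ y - b ∈ D :=
  ((Equiv.subLeft x).existsUnique_congr fun b => by
    rw [Equiv.subLeft_apply, sub_sub_sub_cancel_left]).mpr
    (hD.existsUnique_mem_sub_mem (sub_ne_zero.mpr hxy))

theorem existsUnique_inter (hD : IsAddDifferenceSet D) {b b' : A} (hb : b ≠ b') :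
    ∃! x, x - b ∈ D ∧ x - b' ∈ D :=
  ((Equiv.subRight b).existsUnique_congr fun x => by
    rw [Equiv.subRight_apply, sub_sub_sub_cancel_right]).mpr
    (hD.existsUnique_mem_sub_mem (sub_ne_zero.mpr hb.symm))

end IsAddDifferenceSet

theorem differenceSet_gives_projectivePlane_general
    (A : Type) [AddCommGroup A] (D : Set A)
    (hD : IsAddDifferenceSet D) (hcard : 3 ≤ Nat.card D) :
    (∀ x y : A, x ≠ y → ∃! b : A, x - b ∈ D ∧ y - b ∈ D) ∧
    (∀ b b' : A, b ≠ b' →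
      ({x : A | x - b ∈ D} ≠ {x : A | x - b' ∈ D}) ∧ (∃! x : A, x - b ∈ D ∧ x - b' ∈ D)) ∧
    (∃ p₁ p₂ p₃ p₄ : A, p₁ ≠ p₂ ∧ p₁ ≠ p₃ ∧ p₁ ≠ p₄ ∧ p₂ ≠ p₃ ∧ p₂ ≠ p₄ ∧ p₃ ≠ p₄ ∧
      ∀ b : A, ¬(p₁ - b ∈ D ∧ p₂ - b ∈ D ∧ p₃ - b ∈ D) ∧
               ¬(p₁ - b ∈ D ∧ p₂ - b ∈ D ∧ p₄ - b ∈ D) ∧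
               ¬(p₁ - b ∈ D ∧ p₃ - b ∈ D ∧ p₄ - b ∈ D) ∧
               ¬(p₂ - b ∈ D ∧ p₃ - b ∈ D ∧ p₄ - b ∈ D)) ∧
    Nonempty (@Configuration.ProjectivePlane A A ⟨fun b x => x - b ∈ D⟩) := by
  -- `x ∈ b` unfolds to `x - b ∈ D`, so the configuration lemmas below yield the clauses verbatim
  let _ : Membership A A := ⟨fun b x => x - b ∈ D⟩
  have hline : ∀ x y : A, x ≠ y → ∃! b : A, x ∈ b ∧ y ∈ b := fun _ _ => hD.existsUnique_line
  have hpoint : ∀ b b' : A, b ≠ b' → ∃! x : A, x ∈ b ∧ x ∈ b' :=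
    fun _ _ => hD.existsUnique_inter
  have hthird : ∀ b x y : A, ∃ p ∈ b, p ≠ x ∧ p ≠ y := exists_sub_mem_ne_ne hcard
  obtain ⟨a, -, ha, -⟩ := hthird 0 0 0
  have hquad := Configuration.exists_isQuadrangle_of_ne hline hpoint hthird ha.symm
  exact ⟨hline, fun b b' hb => ⟨Configuration.setOf_mem_ne_of_ne hpoint hthird hb, hpoint b b' hb⟩,
    hquad, Configuration.nonempty_projectivePlane_of_isQuadrangle hline hpoint hquad⟩

/-- A difference set `D` with `|D| ≥ 3` in a finite abelian group `A` yields a projective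
plane: points are elements of `A`, lines are the translates `b + D`, and a point `x` lies
on the line indexed by `b` iff `x − b ∈ D`.  Then (1) any two distinct points lie on a
unique common line, (2) any two distinct lines are distinct as sets and meet in exactly one
point, and (3) there exist four points no three of which are collinear.  In particular this
incidence structure is a projective plane. -/
theorem differenceSet_gives_projectivePlane
    (A : Type) [AddCommGroup A] [Finite A] (D : Set A)
    (hD : IsAddDifferenceSet D) (hcard : 3 ≤ Nat.card D) :
    (∀ x y : A, x ≠ y → ∃! b : A, x - b ∈ D ∧ y - b ∈ D) ∧
    (∀ b b' : A, b ≠ b' →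
      ({x : A | x - b ∈ D} ≠ {x : A | x - b' ∈ D}) ∧ (∃! x : A, x - b ∈ D ∧ x - b' ∈ D)) ∧
    (∃ p₁ p₂ p₃ p₄ : A, p₁ ≠ p₂ ∧ p₁ ≠ p₃ ∧ p₁ ≠ p₄ ∧ p₂ ≠ p₃ ∧ p₂ ≠ p₄ ∧ p₃ ≠ p₄ ∧
      ∀ b : A, ¬(p₁ - b ∈ D ∧ p₂ - b ∈ D ∧ p₃ - b ∈ D) ∧
               ¬(p₁ - b ∈ D ∧ p₂ - b ∈ D ∧ p₄ - b ∈ D) ∧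
               ¬(p₁ - b ∈ D ∧ p₃ - b ∈ D ∧ p₄ - b ∈ D) ∧
               ¬(p₂ - b ∈ D ∧ p₃ - b ∈ D ∧ p₄ - b ∈ D)) ∧
    Nonempty (@Configuration.ProjectivePlane A A ⟨fun b x => x - b ∈ D⟩) :=
  differenceSet_gives_projectivePlane_general A D hD hcard
end

section
/- Let Γ₀ be the group with presentation ⟨s₀, s₁, s₂ ∣ s₀⁷, s₁⁷, s₂⁷, s₀ s₁ s₂³, s₀³ s₁³ s₂⟩. Then the abelianization Γ₀/[Γ₀, Γ₀] has exactly 7 elements, and the derived subgroup [Γ₀, Γ₀] is perfect, i.e. [[Γ₀, Γ₀], [Γ₀, Γ₀]] = [Γ₀, Γ₀]. -/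
/-- The relations of the presentation
`⟨s₀, s₁, s₂ ∣ s₀⁷, s₁⁷, s₂⁷, s₀ s₁ s₂³, s₀³ s₁³ s₂⟩`. -/
def gammaZeroRels : Set (FreeGroup (Fin 3)) :=
  {FreeGroup.of 0 ^ 7, FreeGroup.of 1 ^ 7, FreeGroup.of 2 ^ 7,
    FreeGroup.of 0 * FreeGroup.of 1 * FreeGroup.of 2 ^ 3,
    FreeGroup.of 0 ^ 3 * FreeGroup.of 1 ^ 3 * FreeGroup.of 2}

/-!
Write `x, y, z` for the generators. Modulo commutators `x y = z⁻³`, so `1 = x³ y³ z = z⁻⁸`, which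
with `z⁷ = 1` gives `z = 1` and `y = x⁻¹`; hence `Γ₀^ab` is cyclic on `x`, and the map
`x ↦ 1, y ↦ -1, z ↦ 0` onto `ℤ/7` shows it has order `7`. In the metabelian quotient
`Q = Γ₀ / Γ₀''` the element `z` lies in the abelian group `Q'`, and the conjugates
`βₙ = xⁿ z⁻¹ x⁻ⁿ` satisfy `3 βₙ₊₂ + 3 βₙ₊₁ + 2 βₙ = 0`, `7 βₙ = 0` and `βₙ₊₇ = βₙ`. These force
`β = 0`, so `z = 1` and `y = x⁻¹` in `Q` too: `Q` is cyclic, hence abelian, and `Γ₀' ≤ Γ₀''`.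
-/

open Subgroup

/-- `2 + 3t + 3t²` is a unit of `𝔽₇[t]/(t⁷ - 1) = 𝔽₇[t]/((t - 1)⁷)`, its value at `t = 1` being
`8 ≡ 1`; the coefficients below are those of its inverse `6 + 3t + 4t² + t⁴ + 2t⁵ + 6t⁶`. -/
theorem eq_zero_of_recurrence_of_periodic {A : Type*} [AddCommGroup A] {b : ℕ → A}
    (hrec : ∀ n, 3 • b (n + 2) + 3 • b (n + 1) + 2 • b n = 0)
    (htors : ∀ n, 7 • b n = 0) (hper : ∀ n, b (n + 7) = b n) : b 0 = 0 := by
  have h5 := hrec 5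
  have h6 := hrec 6
  rw [hper 0] at h5 h6
  rw [hper 1] at h6
  linear_combination (norm := module) 6 • hrec 0 + 3 • hrec 1 + 4 • hrec 2 + hrec 4 + 2 • h5
    + 6 • h6 - (5 • htors 0 + 6 • htors 1 + 5 • htors 2 + 3 • htors 3 + 2 • htors 4 + htors 5
    + 3 • htors 6)

theorem commutator_le_ker_of_range_le_zpowers {G H : Type*} [Group G] [Group H] (f : G →* H)
    {g : H} (hf : f.range ≤ zpowers g) : commutator G ≤ f.ker := by
  rw [commutator_def, commutator_le]
  intro a _ b _
  rw [MonoidHom.mem_ker, map_commutatorElement, commutatorElement_eq_one_iff_mul_comm]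
  exact setLike_mul_comm (hf ⟨a, rfl⟩) (hf ⟨b, rfl⟩)

theorem isMulCommutative_commutator_quotient_commutator_commutator (G : Type*) [Group G] :
    IsMulCommutative (commutator (G ⧸ ⁅commutator G, commutator G⁆)) := by
  set N := ⁅commutator G, commutator G⁆
  have hmap : (commutator G).map (QuotientGroup.mk' N) = commutator (G ⧸ N) := by
    rw [map_commutator_eq, MonoidHom.range_eq_top.mpr (QuotientGroup.mk'_surjective N)]
    rfl
  rw [← commutator_self_eq_bot_iff, ← hmap, ← map_commutator, Subgroup.map_eq_bot_iff,
    QuotientGroup.ker_mk']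

structure IsGammaZeroTriple {G : Type*} [Group G] (x y z : G) : Prop where
  pow_x : x ^ 7 = 1
  pow_y : y ^ 7 = 1
  pow_z : z ^ 7 = 1
  mul_mul_pow : x * y * z ^ 3 = 1
  pow_mul_pow_mul : x ^ 3 * y ^ 3 * z = 1

namespace IsGammaZeroTriple

theorem z_eq_one {A : Type*} [CommGroup A] {x y z : A} (h : IsGammaZeroTriple x y z) :
    z = 1 := by
  have hxy : x * y = (z ^ 3)⁻¹ := eq_inv_of_mul_eq_one_left h.mul_mul_pow
  have h8 : z ^ 8 = 1 := by
    rw [← inv_eq_one, ← h.pow_mul_pow_mul, ← mul_pow, hxy]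
    group
  calc z = z ^ 8 * (z ^ 7)⁻¹ := by group
    _ = 1 := by rw [h8, h.pow_z, mul_inv_cancel]

variable {G : Type*} [Group G] {x y z : G}

theorem map {H : Type*} [Group H] (h : IsGammaZeroTriple x y z) (f : G →* H) :
    IsGammaZeroTriple (f x) (f y) (f z) where
  pow_x := by rw [← map_pow, h.pow_x, map_one]
  pow_y := by rw [← map_pow, h.pow_y, map_one]
  pow_z := by rw [← map_pow, h.pow_z, map_one]
  mul_mul_pow := by rw [← map_pow, ← map_mul, ← map_mul, h.mul_mul_pow, map_one]
  pow_mul_pow_mul := by simp only [← map_pow, ← map_mul, h.pow_mul_pow_mul, map_one]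

theorem z_mem_commutator (h : IsGammaZeroTriple x y z) : z ∈ commutator G := by
  rw [← Abelianization.ker_of, MonoidHom.mem_ker]
  exact (h.map Abelianization.of).z_eq_one

open IsMulCommutative in
theorem z_eq_one_of_isMulCommutative_commutator [IsMulCommutative (commutator G)]
    (h : IsGammaZeroTriple x y z) : z = 1 := by
  set β : ℕ → G := fun n => x ^ n * z⁻¹ * (x ^ n)⁻¹ with hβ
  have hβ_mem (n : ℕ) : β n ∈ commutator G :=
    (commutator_normal ⊤ ⊤).conj_mem _ (inv_mem h.z_mem_commutator) _
  have hrec (n : ℕ) : β (n + 2) ^ 3 * β (n + 1) ^ 3 * β n ^ 2 = 1 := by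
    have hy : y = x⁻¹ * (z ^ 3)⁻¹ :=
      eq_inv_mul_of_mul_eq (eq_inv_of_mul_eq_one_left h.mul_mul_pow)
    calc β (n + 2) ^ 3 * β (n + 1) ^ 3 * β n ^ 2 = x ^ n * (x ^ 3 * y ^ 3 * z) * (x ^ n)⁻¹ := by
          simp only [β, conj_pow]
          rw [hy, pow_three (x⁻¹ * _)]
          group
      _ = 1 := by rw [h.pow_mul_pow_mul, mul_one, mul_inv_cancel]
  have htors (n : ℕ) : β n ^ 7 = 1 := by
    simp only [hβ, conj_pow, inv_pow, h.pow_z, inv_one, mul_one, mul_inv_cancel]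
  have hper (n : ℕ) : β (n + 7) = β n := by simp only [hβ, pow_add, h.pow_x, mul_one]
  let b : ℕ → Additive (commutator G) := fun n => .ofMul ⟨β n, hβ_mem n⟩
  have hb : b 0 = 0 := by
    refine eq_zero_of_recurrence_of_periodic (fun n => ?_) (fun n => ?_) (fun n => ?_)
    · simp only [b, ← ofMul_pow, ← ofMul_mul, ofMul_eq_zero]
      exact Subtype.ext (hrec n)
    · simp only [b, ← ofMul_pow, ofMul_eq_zero]
      exact Subtype.ext (htors n)
    · simp only [b, hper]
  have hβ₀ : β 0 = 1 := congrArg Subtype.val hb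
  simpa [hβ] using hβ₀

end IsGammaZeroTriple

local notation "Γ₀" => PresentedGroup gammaZeroRels

theorem isGammaZeroTriple_of : IsGammaZeroTriple (.of 0 : Γ₀) (.of 1) (.of 2) := by
  refine ⟨?_, ?_, ?_, ?_, ?_⟩ <;> simp only [PresentedGroup.of, ← map_pow, ← map_mul] <;>
    exact PresentedGroup.one_of_mem (by simp [gammaZeroRels])

theorem range_le_zpowers_of_isMulCommutative_commutator {G : Type*} [Group G]
    [IsMulCommutative (commutator G)] (f : Γ₀ →* G) : f.range ≤ zpowers (f (.of 0)) := by
  have h := isGammaZeroTriple_of.map f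
  have hz : f (.of 2) = 1 := h.z_eq_one_of_isMulCommutative_commutator
  have hy : f (.of 1) = (f (.of 0))⁻¹ := by
    simpa [hz, mul_eq_one_iff_eq_inv'] using h.mul_mul_pow
  rw [MonoidHom.range_eq_map, ← PresentedGroup.closure_range_of, MonoidHom.map_closure,
    closure_le]
  rintro _ ⟨_, ⟨i, rfl⟩, rfl⟩
  fin_cases i
  · exact mem_zpowers _
  · exact hy ▸ inv_mem (mem_zpowers _)
  · exact hz ▸ one_mem _

theorem card_abelianization_gammaZero : Nat.card (Abelianization Γ₀) = 7 := by
  set g := Abelianization.of (PresentedGroup.of 0 : Γ₀)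
  have hgen (a : Abelianization Γ₀) : a ∈ zpowers g :=
    range_le_zpowers_of_isMulCommutative_commutator Abelianization.of
      (QuotientGroup.mk_surjective a)
  have hρ : ∀ r ∈ gammaZeroRels, FreeGroup.lift
      ![Multiplicative.ofAdd 1, Multiplicative.ofAdd (-1), 1] r = (1 : Multiplicative (ZMod 7)) := by
    intro r hr
    simp only [gammaZeroRels, Set.mem_insert_iff, Set.mem_singleton_iff] at hr
    rcases hr with rfl | rfl | rfl | rfl | rfl <;>
      · simp only [map_pow, map_mul, FreeGroup.lift_apply_of]
        decide
  let ρ := Abelianization.lift (PresentedGroup.toGroup hρ)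
  rw [← orderOf_eq_card_of_forall_mem_zpowers hgen]
  refine Nat.dvd_antisymm (orderOf_dvd_of_pow_eq_one (isGammaZeroTriple_of.map _).pow_x) ?_
  calc 7 = orderOf (ρ g) := by
        simp [ρ, g, PresentedGroup.toGroup.of, orderOf_ofAdd_eq_addOrderOf, ZMod.addOrderOf_one]
    _ ∣ orderOf g := orderOf_map_dvd ρ g

theorem commutator_commutator_gammaZero : ⁅commutator Γ₀, commutator Γ₀⁆ = commutator Γ₀ := by
  have := isMulCommutative_commutator_quotient_commutator_commutator Γ₀
  refine le_antisymm (commutator_mono le_top le_top) ?_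
  rw [← QuotientGroup.ker_mk' ⁅commutator Γ₀, commutator Γ₀⁆]
  exact commutator_le_ker_of_range_le_zpowers _
    (range_le_zpowers_of_isMulCommutative_commutator _)

/-- The abelianization of `Γ₀ = ⟨s₀, s₁, s₂ ∣ s₀⁷, s₁⁷, s₂⁷, s₀ s₁ s₂³, s₀³ s₁³ s₂⟩` has
order `7`, and its derived subgroup is perfect. -/
theorem gammaZero_abelianization_card_and_derived_perfect :
    Nat.card (Abelianization (PresentedGroup gammaZeroRels)) = 7 ∧
    ⁅commutator (PresentedGroup gammaZeroRels), commutator (PresentedGroup gammaZeroRels)⁆ =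
      commutator (PresentedGroup gammaZeroRels) :=
  ⟨card_abelianization_gammaZero, commutator_commutator_gammaZero⟩
end

section
/- Let T be a tree (a connected acyclic simple graph) on a vertex set V, let v and w be adjacent vertices, let q ≥ 1, and let a₁, …, a_q be an injective enumeration of all neighbors of v other than w and b₁, …, b_q an injective enumeration of all neighbors of w other than v. Let g₁, …, g_q be graph automorphisms of T such that, for each i: g_i(v) = b_i and g_i(a_i) = w, and g_i preserves the bipartition of T (equivalently, the graph distance from x to g_i(x) is even for every vertex x). Let Γ be the subgroup of Aut(T) generated by g₁, …, g_q. Then: (1) the homomorphism from the free group on q generators to Aut(T) sending the i-th generator to g_i is injective, so Γ is free of rank q; (2) every non-identity element of Γ fixes no vertex of T; and (3) for every edge {x, y} of T there exists γ ∈ Γ such that the edge {γ(x), γ(y)} contains v or w. -/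
/-!
Let `Aᵢ` and `Bᵢ` be the half-trees hanging off the edge `vw` beyond `aᵢ` and `bᵢ`. Since
`gᵢ` maps the complement of `Aᵢ` into `Bᵢ` and `gᵢ⁻¹` maps the complement of `Bᵢ` into `Aᵢ`,
these sets form a ping-pong table, and a nontrivial reduced word moves `v` and `w`, which lie in
none of them, into the set of its first letter. Conversely `gᵢ` (resp. `gᵢ⁻¹`) moves every
vertex of `Aᵢ` (resp. `Bᵢ`) strictly closer to the edge `vw`, so every vertex is in the orbit of
`v` or `w`; a nontrivial element fixing a vertex would thus have a nontrivial conjugate fixing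
`v` or `w`.
-/

open Set

namespace SimpleGraph

variable {V V' : Type*} {G : SimpleGraph V} {G' : SimpleGraph V'}

theorem Hom.edist_le (f : G →g G') (x y : V) : G'.edist (f x) (f y) ≤ G.edist x y :=
  le_iInf fun p => (SimpleGraph.edist_le (p.map f)).trans (by simp)

theorem Iso.edist_eq (f : G ≃g G') (x y : V) : G'.edist (f x) (f y) = G.edist x y :=
  le_antisymm (f.toHom.edist_le x y) (by simpa using f.symm.toHom.edist_le (f x) (f y))

theorem Iso.dist_eq (f : G ≃g G') (x y : V) : G'.dist (f x) (f y) = G.dist x y := by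
  simp only [dist, f.edist_eq]

variable (G) in
/-- In a tree, the component of `c` after deleting the edge `pc`. -/
def halfTree (p c : V) : Set V := {x | G.dist x p = G.dist x c + 1}

variable {p c c' x : V}

theorem mem_halfTree : x ∈ G.halfTree p c ↔ G.dist x p = G.dist x c + 1 := Iff.rfl

theorem Iso.mem_halfTree_iff (f : G ≃g G') :
    f x ∈ G'.halfTree (f p) (f c) ↔ x ∈ G.halfTree p c := by
  simp only [mem_halfTree, f.dist_eq]

theorem self_notMem_halfTree : p ∉ G.halfTree p c := by
  simp [halfTree]

theorem disjoint_halfTree_swap : Disjoint (G.halfTree p c) (G.halfTree c p) :=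
  Set.disjoint_left.2 fun x h h' => by simp only [mem_halfTree] at h h'; omega

theorem IsTree.compl_halfTree (hT : G.IsTree) (hpc : G.Adj p c) :
    (G.halfTree p c)ᶜ = G.halfTree c p := by
  refine (disjoint_halfTree_swap.subset_compl_left).antisymm' fun x hx => ?_
  simp only [mem_halfTree, mem_compl_iff] at hx ⊢
  have := hT.dist_eq_dist_add_one_of_adj x hpc
  omega

theorem Connected.exists_adj_mem_halfTree (hG : G.Connected) (hx : x ≠ p) :
    ∃ c, G.Adj p c ∧ x ∈ G.halfTree p c := by
  obtain ⟨P, hP⟩ := hG.exists_walk_length_eq_dist p x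
  cases P with
  | nil => exact absurd rfl hx
  | @cons _ c _ hpc P =>
    refine ⟨c, hpc, ?_⟩
    have h₁ : G.dist c x ≤ P.length := dist_le P
    have h₂ : G.dist p x ≤ G.dist p c + G.dist c x := hG.dist_triangle
    rw [dist_eq_one_iff_adj.2 hpc, ← hP, Walk.length_cons] at h₂
    simp only [mem_halfTree, dist_comm (u := x), ← hP, Walk.length_cons]
    omega

theorem IsTree.eq_snd_of_mem_halfTree (hT : G.IsTree) (hpc : G.Adj p c)
    (hx : x ∈ G.halfTree p c) {P : G.Walk p x} (hP : P.length = G.dist p x) : c = P.snd := by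
  classical
  have hPpath : P.reverse.IsPath := (P.isPath_of_length_eq_dist hP).reverse
  obtain ⟨Q, hQ, hQlen⟩ := hT.connected.exists_path_of_dist x c
  have hc : c ∈ P.reverse.support := by
    by_contra hc
    have hp := hT.isAcyclic.mem_support_of_ne_mem_support_of_adj_of_isPath hQ hPpath hpc.symm hc
    have : G.dist x p ≤ Q.length := (dist_le _).trans (Q.length_takeUntil_le_length hp)
    simp only [mem_halfTree] at hx
    omega
  rw [Walk.support_reverse, List.mem_reverse] at hc
  exact hT.isAcyclic.eq_snd_of_adj_start (P.isPath_of_length_eq_dist hP) hpc hc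

theorem IsTree.disjoint_halfTree (hT : G.IsTree) (hc : G.Adj p c) (hc' : G.Adj p c')
    (hne : c ≠ c') : Disjoint (G.halfTree p c) (G.halfTree p c') := by
  refine Set.disjoint_left.2 fun x hx hx' => hne ?_
  obtain ⟨P, hP⟩ := hT.connected.exists_walk_length_eq_dist p x
  rw [hT.eq_snd_of_mem_halfTree hc hx hP, hT.eq_snd_of_mem_halfTree hc' hx' hP]

theorem IsTree.halfTree_subset_halfTree (hT : G.IsTree) (hc : G.Adj p c) (hc' : G.Adj p c')
    (hne : c ≠ c') : G.halfTree p c ⊆ G.halfTree c' p := by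
  rw [← hT.compl_halfTree hc']
  exact (hT.disjoint_halfTree hc hc' hne).subset_compl_right

theorem IsTree.mapsTo_compl_halfTree (hT : G.IsTree) (f : G ≃g G) (hpc : G.Adj p c) :
    MapsTo f (G.halfTree p c)ᶜ (G.halfTree (f c) (f p)) := by
  intro x hx
  rw [hT.compl_halfTree hpc] at hx
  exact f.mem_halfTree_iff.2 hx

theorem IsTree.dist_add_dist_apply_lt (hT : G.IsTree) (f : G ≃g G) {p' : V} (hpp' : G.Adj p p')
    (hpc : G.Adj p c) (hcp' : c ≠ p') (hfc : f c = p') (hx : x ∈ G.halfTree p c) :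
    G.dist (f x) p + G.dist (f x) p' < G.dist x p + G.dist x p' := by
  have hx' := hT.halfTree_subset_halfTree hpc hpp' hcp' hx
  have hfx : G.dist (f x) p' = G.dist x c := by rw [← hfc, f.dist_eq]
  have := hT.dist_eq_dist_add_one_of_adj (f x) hpp'
  rw [mem_halfTree] at hx hx'
  omega

end SimpleGraph

namespace FreeGroup

variable {ι α H : Type*} [Group H] [MulAction H α] {f : ι → H} {X : ι × Bool → Set α}

theorem lift_mk_smul_mem_of_pingPong (hX : Pairwise fun ℓ m => Disjoint (X ℓ) (X m))
    (hf : ∀ i, MapsTo (f i • ·) (X (i, false))ᶜ (X (i, true)))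
    (hf' : ∀ i, MapsTo ((f i)⁻¹ • ·) (X (i, true))ᶜ (X (i, false)))
    {x : α} (hx : ∀ ℓ, x ∉ X ℓ) :
    ∀ {L : List (ι × Bool)}, IsReduced L → ∀ ℓ ∈ L.head?, lift f (mk L) • x ∈ X ℓ
  | [], _, _, h => by simp at h
  | ℓ :: L, hL, m, hm => by
    obtain rfl : ℓ = m := by simpa using hm
    have hy : lift f (mk L) • x ∉ X (ℓ.1, !ℓ.2) := by
      match L, hL with
      | [], _ => simpa using hx _
      | m :: L, hL =>
        rw [isReduced_cons_cons] at hL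
        refine (hX ?_).notMem_of_mem_left (lift_mk_smul_mem_of_pingPong hX hf hf' hx hL.2 m rfl)
        rintro rfl
        simp at hL
    rw [lift_mk, List.map_cons, List.prod_cons, mul_smul, ← lift_mk]
    obtain ⟨i, _ | _⟩ := ℓ
    exacts [hf' i hy, hf i hy]

theorem lift_smul_ne_of_pingPong (hX : Pairwise fun ℓ m => Disjoint (X ℓ) (X m))
    (hf : ∀ i, MapsTo (f i • ·) (X (i, false))ᶜ (X (i, true)))
    (hf' : ∀ i, MapsTo ((f i)⁻¹ • ·) (X (i, true))ᶜ (X (i, false)))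
    {x : α} (hx : ∀ ℓ, x ∉ X ℓ) {ζ : FreeGroup ι} (hζ : ζ ≠ 1) : lift f ζ • x ≠ x := by
  classical
  obtain ⟨ℓ, L, hL⟩ := List.exists_cons_of_ne_nil (mt toWord_eq_nil_iff.1 hζ)
  have hmem :=
    lift_mk_smul_mem_of_pingPong hX hf hf' hx (isReduced_toWord (x := ζ)) ℓ (by simp [hL])
  rw [mk_toWord] at hmem
  exact fun h => hx ℓ (h ▸ hmem)

end FreeGroup

section PingPongInTree

open SimpleGraph FreeGroup

variable {V ι : Type*} {G : SimpleGraph V} {v w : V} {a b : ι → V} {g : ι → Equiv.Perm V}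

/-- The letter `(i, true)` of `FreeGroup ι` stands for `gᵢ` and `(i, false)` for `gᵢ⁻¹`. -/
def pingPongSet (G : SimpleGraph V) (v w : V) (a b : ι → V) : ι × Bool → Set V
  | (i, false) => G.halfTree v (a i)
  | (i, true) => G.halfTree w (b i)

theorem pingPongSet_subset (hT : G.IsTree) (hvw : G.Adj v w)
    (ha : ∀ x, (G.Adj v x ∧ x ≠ w) ↔ ∃ i, a i = x)
    (hb : ∀ x, (G.Adj w x ∧ x ≠ v) ↔ ∃ i, b i = x) :
    ∀ ℓ, pingPongSet G v w a b ℓ ⊆ cond ℓ.2 (G.halfTree v w) (G.halfTree w v)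
  | (i, false) =>
    have hi := (ha (a i)).2 ⟨i, rfl⟩
    hT.halfTree_subset_halfTree hi.1 hvw hi.2
  | (i, true) =>
    have hi := (hb (b i)).2 ⟨i, rfl⟩
    hT.halfTree_subset_halfTree hi.1 hvw.symm hi.2

theorem pairwise_disjoint_pingPongSet (hT : G.IsTree) (hvw : G.Adj v w)
    (ha_inj : Function.Injective a) (hb_inj : Function.Injective b)
    (ha : ∀ x, (G.Adj v x ∧ x ≠ w) ↔ ∃ i, a i = x)
    (hb : ∀ x, (G.Adj w x ∧ x ≠ v) ↔ ∃ i, b i = x) :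
    Pairwise fun ℓ m => Disjoint (pingPongSet G v w a b ℓ) (pingPongSet G v w a b m) := by
  have hsub := pingPongSet_subset hT hvw ha hb
  rintro ⟨i, _ | _⟩ ⟨j, _ | _⟩ hne
  · have hij : i ≠ j := by rintro rfl; exact hne rfl
    exact hT.disjoint_halfTree ((ha _).2 ⟨i, rfl⟩).1 ((ha _).2 ⟨j, rfl⟩).1 (ha_inj.ne hij)
  · exact disjoint_halfTree_swap.mono (hsub (i, false)) (hsub (j, true))
  · exact disjoint_halfTree_swap.mono (hsub (i, true)) (hsub (j, false))
  · have hij : i ≠ j := by rintro rfl; exact hne rfl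
    exact hT.disjoint_halfTree ((hb _).2 ⟨i, rfl⟩).1 ((hb _).2 ⟨j, rfl⟩).1 (hb_inj.ne hij)

theorem notMem_pingPongSet (hT : G.IsTree) (hvw : G.Adj v w)
    (ha : ∀ x, (G.Adj v x ∧ x ≠ w) ↔ ∃ i, a i = x)
    (hb : ∀ x, (G.Adj w x ∧ x ≠ v) ↔ ∃ i, b i = x) {x : V} (hx : x = v ∨ x = w)
    (ℓ : ι × Bool) : x ∉ pingPongSet G v w a b ℓ := by
  have hsub := pingPongSet_subset hT hvw ha hb ℓ
  obtain ⟨i, _ | _⟩ := ℓ <;> rcases hx with rfl | rfl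
  exacts [self_notMem_halfTree, fun h => self_notMem_halfTree (hsub h),
    fun h => self_notMem_halfTree (hsub h), self_notMem_halfTree]

theorem mapsTo_pingPongSet (hT : G.IsTree)
    (ha : ∀ x, (G.Adj v x ∧ x ≠ w) ↔ ∃ i, a i = x)
    (hb : ∀ x, (G.Adj w x ∧ x ≠ v) ↔ ∃ i, b i = x)
    (hg_aut : ∀ i x y, G.Adj (g i x) (g i y) ↔ G.Adj x y)
    (hgv : ∀ i, g i v = b i) (hga : ∀ i, g i (a i) = w) (i : ι) :
    MapsTo (g i • ·) (pingPongSet G v w a b (i, false))ᶜ (pingPongSet G v w a b (i, true)) ∧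
    MapsTo ((g i)⁻¹ • ·) (pingPongSet G v w a b (i, true))ᶜ
      (pingPongSet G v w a b (i, false)) := by
  let φ : G ≃g G := ⟨g i, hg_aut i _ _⟩
  have h₁ := hT.mapsTo_compl_halfTree φ ((ha (a i)).2 ⟨i, rfl⟩).1
  have h₂ := hT.mapsTo_compl_halfTree φ.symm ((hb (b i)).2 ⟨i, rfl⟩).1
  have hb' : (g i).symm (b i) = v := by rw [← hgv i]; simp
  have hw' : (g i).symm w = a i := by rw [← hga i]; simp
  simp only [φ, RelIso.coe_fn_mk, RelIso.coe_fn_symm_mk] at h₁ h₂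
  rw [hga, hgv] at h₁
  rw [hb', hw'] at h₂
  exact ⟨h₁, h₂⟩

theorem exists_lift_apply_eq_or_eq (hT : G.IsTree) (hvw : G.Adj v w)
    (ha : ∀ x, (G.Adj v x ∧ x ≠ w) ↔ ∃ i, a i = x)
    (hb : ∀ x, (G.Adj w x ∧ x ≠ v) ↔ ∃ i, b i = x)
    (hg_aut : ∀ i x y, G.Adj (g i x) (g i y) ↔ G.Adj x y)
    (hgv : ∀ i, g i v = b i) (hga : ∀ i, g i (a i) = w) (x : V) :
    ∃ ζ : FreeGroup ι, lift g ζ x = v ∨ lift g ζ x = w := by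
  induction hn : G.dist x v + G.dist x w using Nat.strong_induction_on generalizing x with
  | _ n ih =>
  by_cases hxv : x = v
  · exact ⟨1, .inl hxv⟩
  by_cases hxw : x = w
  · exact ⟨1, .inr hxw⟩
  obtain ⟨c, hvc, hxc⟩ := hT.connected.exists_adj_mem_halfTree hxv
  by_cases hcw : c = w
  · rw [hcw] at hxc
    obtain ⟨d, hwd, hxd⟩ := hT.connected.exists_adj_mem_halfTree hxw
    have hdv : d ≠ v := by
      rintro rfl
      exact disjoint_halfTree_swap.notMem_of_mem_left hxc hxd
    obtain ⟨i, rfl⟩ := (hb d).1 ⟨hwd, hdv⟩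
    have hbi : (g i).symm (b i) = v := by rw [← hgv i]; simp
    have : G.dist ((g i)⁻¹ x) w + G.dist ((g i)⁻¹ x) v < G.dist x w + G.dist x v :=
      hT.dist_add_dist_apply_lt (⟨g i, hg_aut i _ _⟩ : G ≃g G).symm hvw.symm hwd hdv hbi hxd
    obtain ⟨ζ, hζ⟩ := ih _ (by omega) ((g i)⁻¹ x) rfl
    exact ⟨ζ * (of i)⁻¹, by simpa using hζ⟩
  · obtain ⟨i, rfl⟩ := (ha c).1 ⟨hvc, hcw⟩
    have : G.dist (g i x) v + G.dist (g i x) w < G.dist x v + G.dist x w :=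
      hT.dist_add_dist_apply_lt ⟨g i, hg_aut i _ _⟩ hvw hvc hcw (hga i) hxc
    obtain ⟨ζ, hζ⟩ := ih _ (by omega) (g i x) rfl
    exact ⟨ζ * of i, by simpa using hζ⟩

theorem lift_apply_ne_self (hT : G.IsTree) (hvw : G.Adj v w)
    (ha_inj : Function.Injective a) (hb_inj : Function.Injective b)
    (ha : ∀ x, (G.Adj v x ∧ x ≠ w) ↔ ∃ i, a i = x)
    (hb : ∀ x, (G.Adj w x ∧ x ≠ v) ↔ ∃ i, b i = x)
    (hg_aut : ∀ i x y, G.Adj (g i x) (g i y) ↔ G.Adj x y)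
    (hgv : ∀ i, g i v = b i) (hga : ∀ i, g i (a i) = w) {ζ : FreeGroup ι} (hζ : ζ ≠ 1)
    (x : V) : lift g ζ x ≠ x := by
  obtain ⟨η, hη⟩ := exists_lift_apply_eq_or_eq hT hvw ha hb hg_aut hgv hga x
  have hconj : η * ζ * η⁻¹ ≠ 1 := by simpa [mul_inv_eq_one] using hζ
  have hmaps := mapsTo_pingPongSet hT ha hb hg_aut hgv hga
  intro hfix
  refine lift_smul_ne_of_pingPong (pairwise_disjoint_pingPongSet hT hvw ha_inj hb_inj ha hb)
    (fun i => (hmaps i).1) (fun i => (hmaps i).2) (notMem_pingPongSet hT hvw ha hb hη) hconj ?_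
  simp [Equiv.Perm.smul_def, hfix]

end PingPongInTree

open FreeGroup in
theorem tree_pingPong_free_lattice_general
    (V : Type) (G : SimpleGraph V) (hT : G.IsTree) (v w : V) (hvw : G.Adj v w)
    (q : ℕ)
    (a b : Fin q → V) (ha_inj : Function.Injective a) (hb_inj : Function.Injective b)
    (ha : ∀ x : V, (G.Adj v x ∧ x ≠ w) ↔ ∃ i, a i = x)
    (hb : ∀ x : V, (G.Adj w x ∧ x ≠ v) ↔ ∃ i, b i = x)
    (g : Fin q → Equiv.Perm V)
    (hg_aut : ∀ (i : Fin q) (x y : V), G.Adj (g i x) (g i y) ↔ G.Adj x y)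
    (hgv : ∀ i, g i v = b i) (hga : ∀ i, g i (a i) = w) :
    Function.Injective (FreeGroup.lift g : FreeGroup (Fin q) →* Equiv.Perm V) ∧
    (∀ γ ∈ Subgroup.closure (Set.range g), γ ≠ 1 → ∀ x : V, γ x ≠ x) ∧
    (∀ x y : V, G.Adj x y → ∃ γ ∈ Subgroup.closure (Set.range g),
      γ x = v ∨ γ x = w ∨ γ y = v ∨ γ y = w) := by
  have hfree {ζ : FreeGroup (Fin q)} (hζ : ζ ≠ 1) :=
    lift_apply_ne_self hT hvw ha_inj hb_inj ha hb hg_aut hgv hga hζ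
  rw [← range_lift_eq_closure]
  refine ⟨(injective_iff_map_eq_one _).2 fun ζ h => ?_, ?_, fun x y _ => ?_⟩
  · by_contra hζ
    exact hfree hζ v (by rw [h]; rfl)
  · rintro _ ⟨ζ, rfl⟩ hγ
    exact hfree (by rintro rfl; exact hγ (map_one _))
  · obtain ⟨ζ, hζ⟩ := exists_lift_apply_eq_or_eq hT hvw ha hb hg_aut hgv hga x
    exact ⟨lift g ζ, ⟨ζ, rfl⟩, by tauto⟩

/-- Ping-pong construction of free uniform lattices in trees: let `T` be a tree, `v, w`
adjacent vertices, `a₁, …, a_q` the neighbors of `v` other than `w` and `b₁, …, b_q` the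
neighbors of `w` other than `v`.  If `g₁, …, g_q` are type-preserving automorphisms of `T`
with `gᵢ(v) = bᵢ` and `gᵢ(aᵢ) = w`, then the `gᵢ` generate a free group of rank `q` acting
freely on the vertices, and every edge can be translated by the group to an edge containing
`v` or `w`. -/
theorem tree_pingPong_free_lattice
    (V : Type) (G : SimpleGraph V) (hT : G.IsTree) (v w : V) (hvw : G.Adj v w)
    (q : ℕ) (hq : 1 ≤ q)
    (a b : Fin q → V) (ha_inj : Function.Injective a) (hb_inj : Function.Injective b)
    (ha : ∀ x : V, (G.Adj v x ∧ x ≠ w) ↔ ∃ i, a i = x)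
    (hb : ∀ x : V, (G.Adj w x ∧ x ≠ v) ↔ ∃ i, b i = x)
    (g : Fin q → Equiv.Perm V)
    (hg_aut : ∀ (i : Fin q) (x y : V), G.Adj (g i x) (g i y) ↔ G.Adj x y)
    (hgv : ∀ i, g i v = b i) (hga : ∀ i, g i (a i) = w)
    (hg_even : ∀ (i : Fin q) (x : V), Even (G.dist x (g i x))) :
    Function.Injective (FreeGroup.lift g : FreeGroup (Fin q) →* Equiv.Perm V) ∧
    (∀ γ ∈ Subgroup.closure (Set.range g), γ ≠ 1 → ∀ x : V, γ x ≠ x) ∧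
    (∀ x y : V, G.Adj x y → ∃ γ ∈ Subgroup.closure (Set.range g),
      γ x = v ∨ γ x = w ∨ γ y = v ∨ γ y = w) :=
  tree_pingPong_free_lattice_general V G hT v w hvw q a b ha_inj hb_inj ha hb g hg_aut hgv hga
end
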